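/- arXiv:2402.03674 — 6 statements merged into one kernel-verified Lean document; each statement's English description precedes it below -/
import Mathlib

section
/- Let v be a grid function with v_{0,j} = v_{M_x,j} = 0 for all 0 ≤ j ≤ M_y. Then (2/3)‖v‖ ≤ ‖H_x v‖ ≤ ‖v‖ and (2/3)‖v‖² ≤ (H_x v, v) ≤ ‖v‖². -/
open Finset

noncomputable section

/-- A grid function on the `(M_x+1) × (M_y+1)` grid, represented as a total function
(only the values at indices `0 ≤ i ≤ M_x`, `0 ≤ j ≤ M_y` are relevant). -/
abbrev GridFn : Type := ℕ → ℕ → ℝ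

/-- Spatial stepsize `h_x = 1/M_x`. -/
def hx (Mx : ℕ) : ℝ := ((Mx : ℝ))⁻¹

/-- Spatial stepsize `h_y = 1/M_y`. -/
def hy (My : ℕ) : ℝ := ((My : ℝ))⁻¹

/-- Second-order difference in the x-direction:
`δ_x² v_{i,j} = (v_{i+1,j} − 2v_{i,j} + v_{i−1,j})/h_x²` (used for `1 ≤ i ≤ M_x−1`). -/
def dxx (Mx : ℕ) (v : GridFn) : GridFn := fun i j =>
  (v (i + 1) j - 2 * v i j + v (i - 1) j) / (hx Mx) ^ 2

/-- Second-order difference in the y-direction. -/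
def dyy (My : ℕ) (v : GridFn) : GridFn := fun i j =>
  (v i (j + 1) - 2 * v i j + v i (j - 1)) / (hy My) ^ 2

/-- Compact operator `H_x`: `H_x v_{i,j} = v_{i,j} + (h_x²/12) δ_x² v_{i,j}` for
`1 ≤ i ≤ M_x−1`, and `H_x v_{i,j} = v_{i,j}` for `i ∈ {0, M_x}`. -/
def Hcx (Mx : ℕ) (v : GridFn) : GridFn := fun i j =>
  if 1 ≤ i ∧ i ≤ Mx - 1 then v i j + (hx Mx) ^ 2 / 12 * dxx Mx v i j else v i j

/-- Compact operator `H_y`. -/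
def Hcy (My : ℕ) (v : GridFn) : GridFn := fun i j =>
  if 1 ≤ j ∧ j ≤ My - 1 then v i j + (hy My) ^ 2 / 12 * dyy My v i j else v i j

/-- Compact operator `H_h = H_x H_y`. -/
def Hch (Mx My : ℕ) (v : GridFn) : GridFn := Hcx Mx (Hcy My v)

/-- `Λ_h v = H_y(δ_x² v) + H_x(δ_y² v)` (at interior indices). -/
def Lamh (Mx My : ℕ) (v : GridFn) : GridFn := fun i j =>
  Hcy My (dxx Mx v) i j + Hcx Mx (dyy My v) i j

/-- Discrete L² inner product
`(v,w) = h_x h_y Σ_{i=1}^{M_x−1} Σ_{j=1}^{M_y−1} v_{i,j} w_{i,j}`. -/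
def innp (Mx My : ℕ) (v w : GridFn) : ℝ :=
  hx Mx * hy My * ∑ i ∈ Icc 1 (Mx - 1), ∑ j ∈ Icc 1 (My - 1), v i j * w i j

/-- Discrete L² norm `‖v‖ = (v,v)^{1/2}`. -/
def nrm (Mx My : ℕ) (v : GridFn) : ℝ := Real.sqrt (innp Mx My v v)

/-- Discrete maximum norm `‖v‖_∞ = max_{1≤i≤M_x−1, 1≤j≤M_y−1} |v_{i,j}|`. -/
def nrmInf (Mx My : ℕ) (v : GridFn) : ℝ :=
  ((Icc 1 (Mx - 1)) ×ˢ (Icc 1 (My - 1))).fold max 0 fun p => |v p.1 p.2|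

/-- `‖δ_x v‖_x² = h_x h_y Σ_{i=1}^{M_x} Σ_{j=1}^{M_y−1} (δ_x v_{i−1/2,j})²`. -/
def nrmX2 (Mx My : ℕ) (v : GridFn) : ℝ :=
  hx Mx * hy My * ∑ i ∈ Icc 1 Mx, ∑ j ∈ Icc 1 (My - 1),
    ((v i j - v (i - 1) j) / hx Mx) ^ 2

/-- `‖δ_y v‖_y² = h_x h_y Σ_{i=1}^{M_x−1} Σ_{j=1}^{M_y} (δ_y v_{i,j−1/2})²`. -/
def nrmY2 (Mx My : ℕ) (v : GridFn) : ℝ :=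
  hx Mx * hy My * ∑ i ∈ Icc 1 (Mx - 1), ∑ j ∈ Icc 1 My,
    ((v i j - v i (j - 1)) / hy My) ^ 2

/-- Membership in `V_h^0`: a grid function vanishing on the boundary of the grid. -/
def BZero (Mx My : ℕ) (v : GridFn) : Prop :=
  ∀ i ≤ Mx, ∀ j ≤ My, (i = 0 ∨ i = Mx ∨ j = 0 ∨ j = My) → v i j = 0

/-- Interior grid indices: `1 ≤ i ≤ M_x−1`, `1 ≤ j ≤ M_y−1`. -/
def interiorIdx (Mx My i j : ℕ) : Prop :=
  1 ≤ i ∧ i ≤ Mx - 1 ∧ 1 ≤ j ∧ j ≤ My - 1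

/-- Time average `w̄^{n−1/2} = (w^n + w^{n−1})/2` of a sequence of grid functions. -/
def tbar (u : ℕ → GridFn) (n : ℕ) : GridFn := fun i j => (u n i j + u (n - 1) i j) / 2

/-- Time difference `δ_t w^{n−1/2} = (w^n − w^{n−1})/τ` of a sequence of grid functions. -/
def tdiff (τ : ℝ) (u : ℕ → GridFn) (n : ℕ) : GridFn := fun i j =>
  (u n i j - u (n - 1) i j) / τ

/-- Extrapolation `l^{*,1} = l⁰`, `l^{*,n} = (3 l^{n−1} − l^{n−2})/2` for `n ≥ 2`. -/
def extrap (u : ℕ → GridFn) (n : ℕ) : GridFn :=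
  if n = 1 then u 0 else fun i j => (3 * u (n - 1) i j - u (n - 2) i j) / 2

/-!
Along a grid line, `H_x = I - A/12` with `A = -h_x² δ_x²` the Dirichlet second-difference
matrix. Summation by parts gives `(A w, w) = D := Σ (w_{i+1} - w_i)²`, and
`(a - b)² ≤ 2a² + 2b²` gives both `D ≤ 4‖w‖²` and `‖A w‖² ≤ 4D`. Hence
`(H_x w, w) = ‖w‖² - D/12` lies in `[2/3 ‖w‖², ‖w‖²]` and
`‖H_x w‖² = ‖w‖² - D/6 + ‖A w‖²/144 ≤ ‖w‖²`; summing over grid lines gives the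
inner-product bounds, and Cauchy–Schwarz `(H_x v, v) ≤ ‖H_x v‖ ‖v‖` turns the lower one into
`2/3 ‖v‖ ≤ ‖H_x v‖`.
-/

theorem sum_Icc_one_eq_sum_range (f : ℕ → ℝ) (n : ℕ) :
    ∑ i ∈ Icc 1 n, f i = ∑ i ∈ range n, f (i + 1) := by
  rw [← Ico_add_one_right_eq_Icc, sum_Ico_eq_sum_range]
  simp [add_comm]

section OneDimensional

theorem sum_range_sq_sub_le (d : ℕ → ℝ) (n : ℕ) :
    ∑ i ∈ range n, (d (i + 1) - d i) ^ 2 ≤ 4 * ∑ i ∈ range (n + 1), d i ^ 2 := by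
  have hshift : ∑ i ∈ range n, d (i + 1) ^ 2 ≤ ∑ i ∈ range (n + 1), d i ^ 2 := by
    rw [sum_range_succ']; linarith [sq_nonneg (d 0)]
  have htrunc : ∑ i ∈ range n, d i ^ 2 ≤ ∑ i ∈ range (n + 1), d i ^ 2 := by
    rw [sum_range_succ]; linarith [sq_nonneg (d n)]
  calc ∑ i ∈ range n, (d (i + 1) - d i) ^ 2
      ≤ ∑ i ∈ range n, (2 * d (i + 1) ^ 2 + 2 * d i ^ 2) :=
        sum_le_sum fun i _ => by nlinarith [sq_nonneg (d (i + 1) + d i)]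
    _ = 2 * ∑ i ∈ range n, d (i + 1) ^ 2 + 2 * ∑ i ∈ range n, d i ^ 2 := by
        rw [sum_add_distrib, mul_sum, mul_sum]
    _ ≤ 4 * ∑ i ∈ range (n + 1), d i ^ 2 := by linarith

theorem sum_range_secondDiff_mul (w : ℕ → ℝ) (n : ℕ) :
    ∑ i ∈ range n, (w (i + 2) - 2 * w (i + 1) + w i) * w (i + 1)
      = (w (n + 1) - w n) * w (n + 1) - (w 1 - w 0) * w 0
        - ∑ i ∈ range (n + 1), (w (i + 1) - w i) ^ 2 := by
  induction n with
  | zero => simp; ring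
  | succ n ih => rw [sum_range_succ, ih, sum_range_succ _ (n + 1)]; ring

/-- `H_x` along one grid line, with the factor `h_x²` of `(h_x²/12) δ_x²` cancelled. -/
def compactAvg (w : ℕ → ℝ) (i : ℕ) : ℝ := w i + (w (i + 1) - 2 * w i + w (i - 1)) / 12

theorem compactAvg_succ (w : ℕ → ℝ) (i : ℕ) :
    compactAvg w (i + 1) = w (i + 1) + (w (i + 2) - 2 * w (i + 1) + w i) / 12 := by
  simp [compactAvg]

variable {w : ℕ → ℝ} {n : ℕ}

theorem sum_range_secondDiff_mul_of_boundary (h0 : w 0 = 0) (hn : w (n + 1) = 0) :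
    ∑ i ∈ range n, (w (i + 2) - 2 * w (i + 1) + w i) * w (i + 1)
      = -∑ i ∈ range (n + 1), (w (i + 1) - w i) ^ 2 := by
  rw [sum_range_secondDiff_mul, h0, hn]; ring

theorem sum_compactAvg_mul_eq (h0 : w 0 = 0) (hn : w (n + 1) = 0) :
    ∑ i ∈ Icc 1 n, compactAvg w i * w i
      = ∑ i ∈ Icc 1 n, w i * w i - (∑ i ∈ range (n + 1), (w (i + 1) - w i) ^ 2) / 12 := by
  have expand : ∑ i ∈ range n, compactAvg w (i + 1) * w (i + 1)
      = ∑ i ∈ range n, w (i + 1) * w (i + 1)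
        + (∑ i ∈ range n, (w (i + 2) - 2 * w (i + 1) + w i) * w (i + 1)) / 12 := by
    rw [sum_div, ← sum_add_distrib]
    exact sum_congr rfl fun i _ => by rw [compactAvg_succ]; ring
  rw [sum_Icc_one_eq_sum_range, sum_Icc_one_eq_sum_range, expand,
    sum_range_secondDiff_mul_of_boundary h0 hn]
  ring

theorem sum_compactAvg_mul_self_le (h0 : w 0 = 0) (hn : w (n + 1) = 0) :
    ∑ i ∈ Icc 1 n, compactAvg w i * compactAvg w i
      ≤ ∑ i ∈ Icc 1 n, w i * w i := by
  have green := sum_range_secondDiff_mul_of_boundary h0 hn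
  have hD : 0 ≤ ∑ i ∈ range (n + 1), (w (i + 1) - w i) ^ 2 :=
    sum_nonneg fun _ _ => sq_nonneg _
  have hE : ∑ i ∈ range n, (w (i + 2) - 2 * w (i + 1) + w i) ^ 2
      ≤ 4 * ∑ i ∈ range (n + 1), (w (i + 1) - w i) ^ 2 :=
    calc _ = ∑ i ∈ range n, ((w (i + 2) - w (i + 1)) - (w (i + 1) - w i)) ^ 2 :=
          sum_congr rfl fun i _ => by ring
      _ ≤ _ := sum_range_sq_sub_le (fun i => w (i + 1) - w i) n
  have expand : ∑ i ∈ range n, compactAvg w (i + 1) * compactAvg w (i + 1)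
      = ∑ i ∈ range n, w (i + 1) * w (i + 1)
        + (∑ i ∈ range n, (w (i + 2) - 2 * w (i + 1) + w i) * w (i + 1)) / 6
        + (∑ i ∈ range n, (w (i + 2) - 2 * w (i + 1) + w i) ^ 2) / 144 := by
    rw [sum_div, sum_div, ← sum_add_distrib, ← sum_add_distrib]
    exact sum_congr rfl fun i _ => by rw [compactAvg_succ]; ring
  simp only [sum_Icc_one_eq_sum_range, expand]
  linarith

theorem sum_range_sq_sub_le_of_boundary (h0 : w 0 = 0) (hn : w (n + 1) = 0) :
    ∑ i ∈ range (n + 1), (w (i + 1) - w i) ^ 2 ≤ 4 * ∑ i ∈ Icc 1 n, w i * w i := by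
  have h := sum_range_sq_sub_le w (n + 1)
  rw [sum_range_succ (fun i => w i ^ 2), hn, sum_range_succ' (fun i => w i ^ 2), h0] at h
  simpa [sum_Icc_one_eq_sum_range, sq] using h

theorem two_thirds_mul_sum_le_sum_compactAvg_mul (h0 : w 0 = 0) (hn : w (n + 1) = 0) :
    2 / 3 * ∑ i ∈ Icc 1 n, w i * w i ≤ ∑ i ∈ Icc 1 n, compactAvg w i * w i := by
  rw [sum_compactAvg_mul_eq h0 hn]
  linarith [sum_range_sq_sub_le_of_boundary h0 hn]

theorem sum_compactAvg_mul_le (h0 : w 0 = 0) (hn : w (n + 1) = 0) :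
    ∑ i ∈ Icc 1 n, compactAvg w i * w i ≤ ∑ i ∈ Icc 1 n, w i * w i := by
  rw [sum_compactAvg_mul_eq h0 hn]
  linarith [sum_nonneg fun i (_ : i ∈ range (n + 1)) => sq_nonneg (w (i + 1) - w i)]

end OneDimensional

section GridFunctions
variable {Mx My : ℕ}

theorem hx_mul_hy_nonneg (Mx My : ℕ) : 0 ≤ hx Mx * hy My := by
  unfold hx hy; positivity

theorem innp_self_nonneg (v : GridFn) : 0 ≤ innp Mx My v v :=
  mul_nonneg (hx_mul_hy_nonneg Mx My)
    (sum_nonneg fun _ _ => sum_nonneg fun _ _ => mul_self_nonneg _)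

theorem innp_le_nrm_mul_nrm (u w : GridFn) : innp Mx My u w ≤ nrm Mx My u * nrm Mx My w := by
  have hc := hx_mul_hy_nonneg Mx My
  simp only [nrm, innp, ← sum_product']
  rw [Real.sqrt_mul hc, Real.sqrt_mul hc, mul_mul_mul_comm, Real.mul_self_sqrt hc]
  gcongr
  simpa only [sq] using
    Real.sum_mul_le_sqrt_mul_sqrt _ (fun p : ℕ × ℕ => u p.1 p.2) (fun p => w p.1 p.2)

theorem mul_nrm_le_nrm_of_mul_innp_le {c : ℝ} {u v : GridFn}
    (h : c * innp Mx My v v ≤ innp Mx My u v) : c * nrm Mx My v ≤ nrm Mx My u := by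
  rcases (Real.sqrt_nonneg (innp Mx My v v)).eq_or_lt with hv | hv
  · rw [nrm, ← hv, mul_zero]; exact Real.sqrt_nonneg _
  · refine le_of_mul_le_mul_right ?_ hv
    calc c * nrm Mx My v * nrm Mx My v = c * innp Mx My v v := by
          rw [mul_assoc, nrm, Real.mul_self_sqrt (innp_self_nonneg v)]
      _ ≤ innp Mx My u v := h
      _ ≤ nrm Mx My u * nrm Mx My v := innp_le_nrm_mul_nrm u v

theorem innp_congr {u u' w w' : GridFn} (hu : ∀ i ∈ Icc 1 (Mx - 1), ∀ j, u i j = u' i j)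
    (hw : ∀ i ∈ Icc 1 (Mx - 1), ∀ j, w i j = w' i j) : innp Mx My u w = innp Mx My u' w' := by
  unfold innp
  rw [sum_congr rfl fun i hi => sum_congr rfl fun j _ => by rw [hu i hi, hw i hi]]

theorem const_mul_innp_le_of_columns (c : ℝ) {u w u' w' : GridFn}
    (h : ∀ j ∈ Icc 1 (My - 1), c * ∑ i ∈ Icc 1 (Mx - 1), u i j * w i j
      ≤ ∑ i ∈ Icc 1 (Mx - 1), u' i j * w' i j) :
    c * innp Mx My u w ≤ innp Mx My u' w' := by
  unfold innp
  rw [sum_comm, sum_comm (s := Icc 1 (Mx - 1)), mul_left_comm, mul_sum]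
  exact mul_le_mul_of_nonneg_left (sum_le_sum h) (hx_mul_hy_nonneg Mx My)

theorem innp_le_of_columns {u w u' w' : GridFn}
    (h : ∀ j ∈ Icc 1 (My - 1), ∑ i ∈ Icc 1 (Mx - 1), u i j * w i j
      ≤ ∑ i ∈ Icc 1 (Mx - 1), u' i j * w' i j) :
    innp Mx My u w ≤ innp Mx My u' w' := by
  simpa only [one_mul] using const_mul_innp_le_of_columns 1 (by simpa only [one_mul] using h)

theorem Hcx_apply_of_mem {i : ℕ} (hi : i ∈ Icc 1 (Mx - 1)) (v : GridFn) (j : ℕ) :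
    Hcx Mx v i j = compactAvg (fun k => v k j) i := by
  rw [mem_Icc] at hi
  have : hx Mx ≠ 0 := by simp [hx]; omega
  simp only [Hcx, if_pos hi, dxx, compactAvg]
  field_simp

end GridFunctions

theorem stmt5_general (Mx My : ℕ) (hMx : 2 ≤ Mx) (v : GridFn)
    (hb : ∀ j ≤ My, v 0 j = 0 ∧ v Mx j = 0) :
    (2 / 3 * nrm Mx My v ≤ nrm Mx My (Hcx Mx v) ∧ nrm Mx My (Hcx Mx v) ≤ nrm Mx My v)
    ∧ (2 / 3 * innp Mx My v v ≤ innp Mx My (Hcx Mx v) v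
        ∧ innp Mx My (Hcx Mx v) v ≤ innp Mx My v v) := by
  set Hv : GridFn := fun i j => compactAvg (fun k => v k j) i
  have hH : ∀ i ∈ Icc 1 (Mx - 1), ∀ j, Hcx Mx v i j = Hv i j :=
    fun i hi j => Hcx_apply_of_mem hi v j
  have hcol : ∀ j ∈ Icc 1 (My - 1), v 0 j = 0 ∧ v (Mx - 1 + 1) j = 0 := fun j hj => by
    rw [Nat.sub_add_cancel (by omega : 1 ≤ Mx)]
    exact hb j (by rw [mem_Icc] at hj; omega)
  have lower : 2 / 3 * innp Mx My v v ≤ innp Mx My Hv v := const_mul_innp_le_of_columns _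
    fun j hj => two_thirds_mul_sum_le_sum_compactAvg_mul (hcol j hj).1 (hcol j hj).2
  have upper : innp Mx My Hv v ≤ innp Mx My v v :=
    innp_le_of_columns fun j hj => sum_compactAvg_mul_le (hcol j hj).1 (hcol j hj).2
  have upper_sq : innp Mx My Hv Hv ≤ innp Mx My v v :=
    innp_le_of_columns fun j hj => sum_compactAvg_mul_self_le (hcol j hj).1 (hcol j hj).2
  have hnrm : nrm Mx My (Hcx Mx v) = nrm Mx My Hv := congrArg Real.sqrt (innp_congr hH hH)
  rw [innp_congr hH (fun _ _ _ => rfl), hnrm]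
  exact ⟨⟨mul_nrm_le_nrm_of_mul_innp_le lower, Real.sqrt_le_sqrt upper_sq⟩, lower, upper⟩

/-- If `v` is a grid function with `v_{0,j} = v_{M_x,j} = 0` for all
`0 ≤ j ≤ M_y`, then `(2/3)‖v‖ ≤ ‖H_x v‖ ≤ ‖v‖` and `(2/3)‖v‖² ≤ (H_x v, v) ≤ ‖v‖²`. -/
theorem stmt5 (Mx My : ℕ) (hMx : 2 ≤ Mx) (hMy : 2 ≤ My) (v : GridFn)
    (hb : ∀ j ≤ My, v 0 j = 0 ∧ v Mx j = 0) :
    (2 / 3 * nrm Mx My v ≤ nrm Mx My (Hcx Mx v) ∧ nrm Mx My (Hcx Mx v) ≤ nrm Mx My v)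
    ∧ (2 / 3 * innp Mx My v v ≤ innp Mx My (Hcx Mx v) v
        ∧ innp Mx My (Hcx Mx v) v ≤ innp Mx My v v) :=
  stmt5_general Mx My hMx v hb
end
end

section
/- There exists a constant C > 0 such that for all integers M_x, M_y ≥ 2 and all grid functions v ∈ V_h^0, ‖v‖_∞ ≤ C (‖H_h v‖ + ‖Λ_h v‖). -/
open Finset

noncomputable section

/-! Let `d` be the mixed difference `v i j - v (i-1) j - v i (j-1) + v (i-1) (j-1)` and
`S = Σ d²`, so that `M_x M_y S = ‖δ_x δ_y v‖²`. Telescoping in each direction and Cauchy–Schwarz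
give `v i j ² ≤ M_x M_y S`. At interior points `Λ_h v = M_x² (a + c/12) + M_y² (b + c/12)`, with
`a, b` the undivided second differences and `c` the undivided mixed fourth difference, so
`(Λ_h v)² ≥ 4 M_x² M_y² (a + c/12)(b + c/12)`. Summation by parts gives `Σ ab = S` and
`Σ ac = -Σ (d (i+1) j - d i j)² ≥ -4S`, and likewise `Σ bc ≥ -4S`; hence
`Σ (a + c/12)(b + c/12) ≥ S/3` and `‖Λ_h v‖² ≥ (4/3) M_x M_y S ≥ ‖v‖_∞²`. -/
theorem sum_Icc_sub_pred (f : ℕ → ℝ) (n : ℕ) :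
    ∑ k ∈ Icc 1 n, (f k - f (k - 1)) = f n - f 0 := by
  induction n with
  | zero => simp
  | succ n ih => rw [sum_Icc_succ_top (by omega), ih, Nat.add_sub_cancel]; ring

theorem sum_secondDiff_mul_eq_neg_sum_mul {M : ℕ} (hM : 1 ≤ M) (u w : ℕ → ℝ)
    (hw₀ : w 0 = 0) (hwM : w M = 0) :
    ∑ i ∈ Icc 1 (M - 1), (u (i + 1) - 2 * u i + u (i - 1)) * w i
      = -∑ i ∈ Icc 1 M, (u i - u (i - 1)) * (w i - w (i - 1)) := by
  -- telescope `(u (i + 1) - u i) * w i`, which vanishes at `i = 0` and `i = M`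
  have htele := sum_Icc_sub_pred (fun i => (u (i + 1) - u i) * w i) M
  have hlast : ∑ i ∈ Icc 1 M, (u (i + 1) - 2 * u i + u (i - 1)) * w i
      = ∑ i ∈ Icc 1 (M - 1), (u (i + 1) - 2 * u i + u (i - 1)) * w i := by
    conv_lhs => rw [← Nat.sub_add_cancel hM]
    rw [sum_Icc_succ_top (by omega), Nat.sub_add_cancel hM, hwM, mul_zero, add_zero]
  rw [← hlast, eq_neg_iff_add_eq_zero, ← sum_add_distrib]
  simp only [hw₀, hwM, mul_zero, sub_zero] at htele
  rw [← htele]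
  refine sum_congr rfl fun i hi => ?_
  rw [Nat.sub_add_cancel (mem_Icc.1 hi).1]
  ring

theorem sum_sq_sub_le_four_mul_sum_sq (M : ℕ) (g : ℕ → ℝ) :
    ∑ i ∈ Icc 1 (M - 1), (g (i + 1) - g i) ^ 2 ≤ 4 * ∑ i ∈ Icc 1 M, g i ^ 2 := by
  have hshift : ∑ i ∈ Icc 1 (M - 1), g (i + 1) ^ 2 ≤ ∑ i ∈ Icc 1 M, g i ^ 2 := by
    have := sum_map (Icc 1 (M - 1)) (addRightEmbedding 1) fun i => g i ^ 2
    rw [map_add_right_Icc] at this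
    simp only [addRightEmbedding_apply] at this
    rw [← this]
    exact sum_le_sum_of_subset_of_nonneg (fun i => by simp only [mem_Icc]; omega)
      fun i _ _ => sq_nonneg _
  have hsub : ∑ i ∈ Icc 1 (M - 1), g i ^ 2 ≤ ∑ i ∈ Icc 1 M, g i ^ 2 :=
    sum_le_sum_of_subset_of_nonneg (Icc_subset_Icc le_rfl (Nat.sub_le M 1))
      fun i _ _ => sq_nonneg _
  calc ∑ i ∈ Icc 1 (M - 1), (g (i + 1) - g i) ^ 2
      ≤ ∑ i ∈ Icc 1 (M - 1), (2 * g (i + 1) ^ 2 + 2 * g i ^ 2) :=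
        sum_le_sum fun i _ => by nlinarith [sq_nonneg (g (i + 1) + g i)]
    _ ≤ 4 * ∑ i ∈ Icc 1 M, g i ^ 2 := by
        rw [sum_add_distrib, ← mul_sum, ← mul_sum]; linarith

theorem sq_le_mul_sum_sq_sub_pred {M n : ℕ} (hn : n ≤ M) (f : ℕ → ℝ) (hf : f 0 = 0) :
    f n ^ 2 ≤ M * ∑ k ∈ Icc 1 M, (f k - f (k - 1)) ^ 2 := by
  have hrepr : f n = ∑ k ∈ Icc 1 n, (f k - f (k - 1)) := by rw [sum_Icc_sub_pred, hf, sub_zero]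
  calc f n ^ 2 ≤ (∑ k ∈ Icc 1 M, |f k - f (k - 1)|) ^ 2 := by
        rw [← sq_abs, hrepr]
        gcongr
        exact (abs_sum_le_sum_abs _ _).trans (sum_le_sum_of_subset_of_nonneg
          (Icc_subset_Icc le_rfl hn) fun k _ _ => abs_nonneg _)
    _ ≤ M * ∑ k ∈ Icc 1 M, (f k - f (k - 1)) ^ 2 := by
        simpa using sq_sum_le_card_mul_sum_sq (s := Icc 1 M) (f := fun k => |f k - f (k - 1)|)

def secDiffX (v : GridFn) : GridFn := fun i j => v (i + 1) j - 2 * v i j + v (i - 1) j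

def secDiffY (v : GridFn) : GridFn := fun i j => v i (j + 1) - 2 * v i j + v i (j - 1)

def mixedDiff (v : GridFn) : GridFn := fun i j =>
  v i j - v (i - 1) j - v i (j - 1) + v (i - 1) (j - 1)

def mixedEnergy (Mx My : ℕ) (v : GridFn) : ℝ :=
  ∑ i ∈ Icc 1 Mx, ∑ j ∈ Icc 1 My, mixedDiff v i j ^ 2

theorem secDiffX_secDiffY (v : GridFn) : secDiffX (secDiffY v) = secDiffY (secDiffX v) := by
  funext i j; simp only [secDiffX, secDiffY]; ring

theorem mixedEnergy_nonneg (Mx My : ℕ) (v : GridFn) : 0 ≤ mixedEnergy Mx My v :=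
  sum_nonneg fun _ _ => sum_nonneg fun _ _ => sq_nonneg _

theorem mixedEnergy_transpose (Mx My : ℕ) (v : GridFn) :
    mixedEnergy My Mx (fun i j => v j i) = mixedEnergy Mx My v := by
  rw [mixedEnergy, sum_comm]
  exact sum_congr rfl fun i _ => sum_congr rfl fun j _ => by simp only [mixedDiff]; ring

namespace BZero

variable {Mx My : ℕ} {v : GridFn}

theorem transpose (hv : BZero Mx My v) : BZero My Mx fun i j => v j i :=
  fun i hi j hj hb => hv j hj i hi (by omega)

theorem secDiffY_eq_zero (hv : BZero Mx My v) {i j : ℕ} (hi : i = 0 ∨ i = Mx)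
    (hj : j + 1 ≤ My) : secDiffY v i j = 0 := by
  have hi' : i ≤ Mx := by omega
  simp only [secDiffY, hv i hi' (j + 1) hj (by omega), hv i hi' j (by omega) (by omega),
    hv i hi' (j - 1) (by omega) (by omega)]
  ring

theorem sub_pred_eq_zero (hv : BZero Mx My v) {i j : ℕ} (hi : i ≤ Mx) (hj : j = 0 ∨ j = My) :
    v i j - v (i - 1) j = 0 := by
  rw [hv i hi j (by omega) (by omega), hv (i - 1) (by omega) j (by omega) (by omega), sub_zero]

theorem sum_secDiffX_mul_secDiffY (hv : BZero Mx My v) (hMx : 1 ≤ Mx) (hMy : 1 ≤ My) :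
    ∑ i ∈ Icc 1 (Mx - 1), ∑ j ∈ Icc 1 (My - 1), secDiffX v i j * secDiffY v i j
      = mixedEnergy Mx My v := by
  have hx : ∀ j ∈ Icc 1 (My - 1), ∑ i ∈ Icc 1 (Mx - 1), secDiffX v i j * secDiffY v i j
      = -∑ i ∈ Icc 1 Mx, (v i j - v (i - 1) j) * (secDiffY v i j - secDiffY v (i - 1) j) :=
    fun j hj => sum_secondDiff_mul_eq_neg_sum_mul hMx (fun i => v i j) (fun i => secDiffY v i j)
      (hv.secDiffY_eq_zero (.inl rfl) (by rw [mem_Icc] at hj; omega))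
      (hv.secDiffY_eq_zero (.inr rfl) (by rw [mem_Icc] at hj; omega))
  have hy : ∀ i ∈ Icc 1 Mx, ∑ j ∈ Icc 1 (My - 1),
      (v i j - v (i - 1) j) * (secDiffY v i j - secDiffY v (i - 1) j)
        = -∑ j ∈ Icc 1 My, mixedDiff v i j ^ 2 := by
    intro i hi
    have hiM : i ≤ Mx := (mem_Icc.1 hi).2
    refine (sum_congr rfl fun j _ => ?_).trans ((sum_secondDiff_mul_eq_neg_sum_mul hMy
      (fun j => v i j - v (i - 1) j) (fun j => v i j - v (i - 1) j)
      (hv.sub_pred_eq_zero hiM (.inl rfl)) (hv.sub_pred_eq_zero hiM (.inr rfl))).trans ?_)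
    · simp only [secDiffY]; ring
    · simp only [mixedDiff]
      congr 1
      exact sum_congr rfl fun j _ => by ring
  rw [sum_comm, sum_congr rfl hx, sum_neg_distrib, sum_comm, sum_congr rfl hy,
    sum_neg_distrib, neg_neg, mixedEnergy]

theorem neg_four_mul_mixedEnergy_le_sum_secDiffYX_mul_secDiffY (hv : BZero Mx My v)
    (hMx : 1 ≤ Mx) :
    -(4 * mixedEnergy Mx My v) ≤ ∑ i ∈ Icc 1 (Mx - 1), ∑ j ∈ Icc 1 (My - 1),
      secDiffY (secDiffX v) i j * secDiffY v i j := by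
  have hx : ∀ j ∈ Icc 1 (My - 1),
      ∑ i ∈ Icc 1 (Mx - 1), secDiffX (secDiffY v) i j * secDiffY v i j
        = -∑ i ∈ Icc 1 Mx, (mixedDiff v i (j + 1) - mixedDiff v i j) ^ 2 := by
    intro j hj
    have hj : j + 1 ≤ My := by rw [mem_Icc] at hj; omega
    refine (sum_secondDiff_mul_eq_neg_sum_mul hMx (fun i => secDiffY v i j)
      (fun i => secDiffY v i j) (hv.secDiffY_eq_zero (.inl rfl) hj)
      (hv.secDiffY_eq_zero (.inr rfl) hj)).trans ?_
    simp only [secDiffY, mixedDiff, Nat.add_sub_cancel]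
    congr 1
    exact sum_congr rfl fun i _ => by ring
  have hy : ∑ j ∈ Icc 1 (My - 1), ∑ i ∈ Icc 1 Mx,
      (mixedDiff v i (j + 1) - mixedDiff v i j) ^ 2 ≤ 4 * mixedEnergy Mx My v := by
    rw [sum_comm, mixedEnergy, mul_sum]
    exact sum_le_sum fun i _ => sum_sq_sub_le_four_mul_sum_sq My fun j => mixedDiff v i j
  rw [← secDiffX_secDiffY, sum_comm, sum_congr rfl hx, sum_neg_distrib]
  linarith

theorem neg_four_mul_mixedEnergy_le_sum_secDiffX_mul_secDiffYX (hv : BZero Mx My v)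
    (hMy : 1 ≤ My) :
    -(4 * mixedEnergy Mx My v) ≤ ∑ i ∈ Icc 1 (Mx - 1), ∑ j ∈ Icc 1 (My - 1),
      secDiffX v i j * secDiffY (secDiffX v) i j := by
  have h := hv.transpose.neg_four_mul_mixedEnergy_le_sum_secDiffYX_mul_secDiffY hMy
  rw [mixedEnergy_transpose, sum_comm] at h
  refine h.trans_eq (sum_congr rfl fun i _ => sum_congr rfl fun j _ => ?_)
  rw [mul_comm, ← secDiffX_secDiffY]
  rfl

theorem sq_le_mul_mixedEnergy (hv : BZero Mx My v) {i j : ℕ} (hi : i ≤ Mx) (hj : j ≤ My) :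
    v i j ^ 2 ≤ Mx * My * mixedEnergy Mx My v := by
  have hcol : ∀ k ∈ Icc 1 Mx,
      (v k j - v (k - 1) j) ^ 2 ≤ My * ∑ l ∈ Icc 1 My, mixedDiff v k l ^ 2 := by
    intro k hk
    refine (sq_le_mul_sum_sq_sub_pred hj (fun l => v k l - v (k - 1) l)
      (hv.sub_pred_eq_zero (mem_Icc.1 hk).2 (.inl rfl))).trans_eq ?_
    simp only [mixedDiff]
    congr 1
    exact sum_congr rfl fun l _ => by ring
  calc v i j ^ 2 ≤ Mx * ∑ k ∈ Icc 1 Mx, (v k j - v (k - 1) j) ^ 2 :=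
        sq_le_mul_sum_sq_sub_pred hi (fun k => v k j) (hv 0 (Nat.zero_le _) j hj (.inl rfl))
    _ ≤ Mx * ∑ k ∈ Icc 1 Mx, My * ∑ l ∈ Icc 1 My, mixedDiff v k l ^ 2 := by
        gcongr with k hk
        exact hcol k hk
    _ = Mx * My * mixedEnergy Mx My v := by rw [mixedEnergy, ← mul_sum, mul_assoc]

end BZero

theorem lamh_eq {Mx My i j : ℕ} (v : GridFn) (hMx : Mx ≠ 0) (hMy : My ≠ 0)
    (hi : 1 ≤ i ∧ i ≤ Mx - 1) (hj : 1 ≤ j ∧ j ≤ My - 1) :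
    Lamh Mx My v i j
      = (Mx : ℝ) ^ 2 * (secDiffX v i j + secDiffY (secDiffX v) i j / 12)
        + (My : ℝ) ^ 2 * (secDiffY v i j + secDiffY (secDiffX v) i j / 12) := by
  simp only [Lamh, Hcy, Hcx, if_pos hi, if_pos hj, dxx, dyy, hx, hy, secDiffX, secDiffY]
  field_simp
  ring

theorem mul_mixedEnergy_le_innp_lamh {Mx My : ℕ} {v : GridFn} (hv : BZero Mx My v)
    (hMx : 1 ≤ Mx) (hMy : 1 ≤ My) :
    Mx * My * mixedEnergy Mx My v ≤ innp Mx My (Lamh Mx My v) (Lamh Mx My v) := by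
  set S := mixedEnergy Mx My v
  set a := secDiffX v
  set b := secDiffY v
  set c := secDiffY (secDiffX v)
  have hprod : S / 3 ≤ ∑ i ∈ Icc 1 (Mx - 1), ∑ j ∈ Icc 1 (My - 1),
      (a i j + c i j / 12) * (b i j + c i j / 12) := by
    have hexpand : ∑ i ∈ Icc 1 (Mx - 1), ∑ j ∈ Icc 1 (My - 1),
        (a i j + c i j / 12) * (b i j + c i j / 12)
          = ∑ i ∈ Icc 1 (Mx - 1), ∑ j ∈ Icc 1 (My - 1), a i j * b i j
            + (∑ i ∈ Icc 1 (Mx - 1), ∑ j ∈ Icc 1 (My - 1), a i j * c i j) / 12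
            + (∑ i ∈ Icc 1 (Mx - 1), ∑ j ∈ Icc 1 (My - 1), c i j * b i j) / 12
            + (∑ i ∈ Icc 1 (Mx - 1), ∑ j ∈ Icc 1 (My - 1), c i j * c i j) / 144 := by
      simp only [sum_div, ← sum_add_distrib]
      exact sum_congr rfl fun i _ => sum_congr rfl fun j _ => by ring
    have hcc : 0 ≤ ∑ i ∈ Icc 1 (Mx - 1), ∑ j ∈ Icc 1 (My - 1), c i j * c i j :=
      sum_nonneg fun _ _ => sum_nonneg fun _ _ => mul_self_nonneg _
    rw [hexpand, hv.sum_secDiffX_mul_secDiffY hMx hMy]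
    linarith [hv.neg_four_mul_mixedEnergy_le_sum_secDiffYX_mul_secDiffY hMx,
      hv.neg_four_mul_mixedEnergy_le_sum_secDiffX_mul_secDiffYX hMy]
  have hpoint : ∀ i ∈ Icc 1 (Mx - 1), ∀ j ∈ Icc 1 (My - 1),
      4 * ((Mx : ℝ) ^ 2 * My ^ 2) * ((a i j + c i j / 12) * (b i j + c i j / 12))
        ≤ Lamh Mx My v i j * Lamh Mx My v i j := by
    intro i hi j hj
    rw [lamh_eq v (by omega) (by omega) (mem_Icc.1 hi) (mem_Icc.1 hj)]
    nlinarith [sq_nonneg ((Mx : ℝ) ^ 2 * (a i j + c i j / 12) - My ^ 2 * (b i j + c i j / 12))]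
  have hMx' : (0 : ℝ) < Mx := by exact_mod_cast hMx
  have hMy' : (0 : ℝ) < My := by exact_mod_cast hMy
  calc Mx * My * S ≤ (Mx : ℝ)⁻¹ * (My : ℝ)⁻¹ * (4 * ((Mx : ℝ) ^ 2 * My ^ 2) * (S / 3)) := by
        field_simp
        nlinarith [mixedEnergy_nonneg Mx My v, mul_pos hMx' hMy']
    _ ≤ innp Mx My (Lamh Mx My v) (Lamh Mx My v) := by
        rw [innp, hx, hy]
        gcongr
        refine (mul_le_mul_of_nonneg_left hprod (by positivity)).trans ?_
        rw [mul_sum]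
        exact sum_le_sum fun i hi => (mul_sum _ _ _).trans_le (sum_le_sum (hpoint i hi))

/-- There is a constant `C > 0` such that for all `M_x, M_y ≥ 2` and all
`v ∈ V_h^0`, `‖v‖_∞ ≤ C (‖H_h v‖ + ‖Λ_h v‖)`. -/
theorem stmt7 :
    ∃ C > (0:ℝ), ∀ Mx My : ℕ, 2 ≤ Mx → 2 ≤ My → ∀ v : GridFn, BZero Mx My v →
      nrmInf Mx My v ≤ C * (nrm Mx My (Hch Mx My v) + nrm Mx My (Lamh Mx My v)) := by
  refine ⟨1, one_pos, fun Mx My hMx hMy v hv => ?_⟩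
  have hH := Real.sqrt_nonneg (innp Mx My (Hch Mx My v) (Hch Mx My v))
  have hΛ := Real.sqrt_nonneg (innp Mx My (Lamh Mx My v) (Lamh Mx My v))
  rw [nrmInf, fold_max_le, one_mul]
  refine ⟨by unfold nrm; linarith, fun p hp => ?_⟩
  obtain ⟨hi, hj⟩ := mem_product.1 hp
  have hv_sq := (hv.sq_le_mul_mixedEnergy (i := p.1) (j := p.2)
    (by rw [mem_Icc] at hi; omega) (by rw [mem_Icc] at hj; omega)).trans
    (mul_mixedEnergy_le_innp_lamh hv (by omega) (by omega))
  have := Real.abs_le_sqrt hv_sq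
  unfold nrm
  linarith
end
end

section
/- For any grid function v ∈ V_h^0, the discrete inner product satisfies (δ_x² δ_y² v, Λ_h v) ≤ 0. -/
open Finset

noncomputable section

/-!
Since `δ_x²` and `δ_y²` commute and `Λ_h` splits into two one-dimensional pieces, so the inner
product is a sum over grid lines of the one-dimensional forms `Σ_j δ²g_j (g_j + (h²/12) δ²g_j)`,
where `g` is `δ_x² v` along a column (resp. `δ_y² v` along a row) and vanishes at both ends.
Summation by parts gives `Σ δ²g · g = -Σ (Δg)²`, while `δ²g_j = Δg_{j+1} - Δg_j` and `(a - b)² ≤ 2a² + 2b²` give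
`Σ (δ²g)² ≤ 4 Σ (Δg)²`; hence the one-dimensional form is at most `-(2/3h²) Σ (Δg)² ≤ 0`.
-/

def secondDiff (g : ℕ → ℝ) (j : ℕ) : ℝ := g (j + 1) - 2 * g j + g (j - 1)

theorem sum_secondDiff_mul_add_sum_sq_sub (N : ℕ) (g : ℕ → ℝ) :
    ∑ j ∈ Icc 1 N, secondDiff g j * g j + ∑ j ∈ Icc 1 (N + 1), (g j - g (j - 1)) ^ 2
      = (g (N + 1) - g N) * g (N + 1) - (g 1 - g 0) * g 0 := by
  induction N with
  | zero =>
    simp only [Order.lt_one_iff, Icc_eq_empty_of_lt, sum_empty, zero_add, Icc_self, sum_singleton,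
      tsub_self]
    ring
  | succ n ih =>
    rw [sum_Icc_succ_top (by omega), sum_Icc_succ_top (by omega)]
    simp only [secondDiff, Nat.add_sub_cancel] at ih ⊢
    linear_combination ih

/-- The boundary terms are kept because the induction needs them. -/
theorem sum_sq_secondDiff_le (N : ℕ) (g : ℕ → ℝ) :
    ∑ j ∈ Icc 1 N, secondDiff g j ^ 2
      ≤ 4 * ∑ j ∈ Icc 1 (N + 1), (g j - g (j - 1)) ^ 2
        - 2 * (g 1 - g 0) ^ 2 - 2 * (g (N + 1) - g N) ^ 2 := by
  induction N with
  | zero =>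
    simp only [Order.lt_one_iff, Icc_eq_empty_of_lt, sum_empty, zero_add, Icc_self, sum_singleton,
      tsub_self, sub_nonneg]
    nlinarith [sq_nonneg (g 1 - g 0)]
  | succ n ih =>
    rw [sum_Icc_succ_top (by omega), sum_Icc_succ_top (by omega)]
    simp only [secondDiff, Nat.add_sub_cancel] at ih ⊢
    nlinarith [sq_nonneg (g (n + 2) - g (n + 1) + (g (n + 1) - g n))]

theorem sum_secondDiff_mul_twelve_mul_add_nonpos (N : ℕ) (g : ℕ → ℝ)
    (h0 : g 0 = 0) (hN : g (N + 1) = 0) :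
    ∑ j ∈ Icc 1 N, secondDiff g j * (12 * g j + secondDiff g j) ≤ 0 := by
  have parts := sum_secondDiff_mul_add_sum_sq_sub N g
  have bound := sum_sq_secondDiff_le N g
  have energy_nonneg : 0 ≤ ∑ j ∈ Icc 1 (N + 1), (g j - g (j - 1)) ^ 2 :=
    sum_nonneg fun _ _ => sq_nonneg _
  rw [h0, hN] at parts
  simp only [mul_add, sum_add_distrib, ← mul_sum, ← sq, mul_left_comm _ (12 : ℝ)]
  nlinarith [sq_nonneg (g 1 - g 0), sq_nonneg (g (N + 1) - g N)]

theorem sum_dxx_mul_Hcx_nonpos (M : ℕ) (w : GridFn) (j : ℕ) (h0 : w 0 j = 0)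
    (hM : w M j = 0) :
    ∑ i ∈ Icc 1 (M - 1), dxx M w i j * Hcx M w i j ≤ 0 := by
  rcases M with _ | N
  · simp
  have term (i : ℕ) (hi : i ∈ Icc 1 N) : dxx (N + 1) w i j * Hcx (N + 1) w i j
      = secondDiff (w · j) i * (12 * w i j + secondDiff (w · j) i) / (12 * hx (N + 1) ^ 2) := by
    rw [mem_Icc] at hi
    have hh : hx (N + 1) ≠ 0 := by unfold hx; positivity
    simp only [Hcx, dxx, secondDiff, Nat.add_sub_cancel, if_pos hi]
    field_simp
  rw [Nat.add_sub_cancel, sum_congr rfl term, ← sum_div]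
  exact div_nonpos_of_nonpos_of_nonneg
    (sum_secondDiff_mul_twelve_mul_add_nonpos N (w · j) h0 hM) (by positivity)

theorem dyy_eq_dxx_swap (M : ℕ) (v : GridFn) (i j : ℕ) :
    dyy M v i j = dxx M (Function.swap v) j i := rfl

theorem Hcy_eq_Hcx_swap (M : ℕ) (v : GridFn) (i j : ℕ) :
    Hcy M v i j = Hcx M (Function.swap v) j i := rfl

theorem sum_dyy_mul_Hcy_nonpos (M : ℕ) (w : GridFn) (i : ℕ) (h0 : w i 0 = 0)
    (hM : w i M = 0) :
    ∑ j ∈ Icc 1 (M - 1), dyy M w i j * Hcy M w i j ≤ 0 := by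
  simpa only [dyy_eq_dxx_swap, Hcy_eq_Hcx_swap] using
    sum_dxx_mul_Hcx_nonpos M (Function.swap w) i h0 hM

theorem dxx_dyy_comm (Mx My : ℕ) (v : GridFn) (i j : ℕ) :
    dxx Mx (dyy My v) i j = dyy My (dxx Mx v) i j := by
  simp only [dxx, dyy]
  ring

theorem dxx_eq_zero_of_row_eq_zero {M : ℕ} {v : GridFn} {i j : ℕ}
    (hrow : ∀ k ≤ M, v k j = 0) (hi : i < M) : dxx M v i j = 0 := by
  simp [dxx, hrow (i + 1) hi, hrow i hi.le, hrow (i - 1) (by omega)]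

theorem dyy_eq_zero_of_column_eq_zero {M : ℕ} {v : GridFn} {i j : ℕ}
    (hcol : ∀ k ≤ M, v i k = 0) (hj : j < M) : dyy M v i j = 0 := by
  simp [dyy, hcol (j + 1) hj, hcol j hj.le, hcol (j - 1) (by omega)]

theorem stmt10_general (Mx My : ℕ) (v : GridFn)
    (hv : BZero Mx My v) :
    innp Mx My (dxx Mx (dyy My v)) (Lamh Mx My v) ≤ 0 := by
  have hy_part_nonpos : ∑ i ∈ Icc 1 (Mx - 1), ∑ j ∈ Icc 1 (My - 1),
      dxx Mx (dyy My v) i j * Hcy My (dxx Mx v) i j ≤ 0 := by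
    simp only [dxx_dyy_comm]
    refine sum_nonpos fun i hi => sum_dyy_mul_Hcy_nonpos My _ i ?_ ?_ <;>
      · rw [mem_Icc] at hi
        exact dxx_eq_zero_of_row_eq_zero (fun k hk => hv k hk _ (by omega) (by omega)) (by omega)
  have hx_part_nonpos : ∑ j ∈ Icc 1 (My - 1), ∑ i ∈ Icc 1 (Mx - 1),
      dxx Mx (dyy My v) i j * Hcx Mx (dyy My v) i j ≤ 0 := by
    refine sum_nonpos fun j hj => sum_dxx_mul_Hcx_nonpos Mx _ j ?_ ?_ <;>
      · rw [mem_Icc] at hj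
        exact dyy_eq_zero_of_column_eq_zero (fun k hk => hv _ (by omega) k hk (by omega)) (by omega)
  have hx_nonneg : 0 ≤ hx Mx := by unfold hx; positivity
  have hy_nonneg : 0 ≤ hy My := by unfold hy; positivity
  rw [sum_comm] at hx_part_nonpos
  rw [innp]
  refine mul_nonpos_of_nonneg_of_nonpos (mul_nonneg hx_nonneg hy_nonneg) ?_
  simp only [Lamh, mul_add, sum_add_distrib]
  linarith

/-- For any `v ∈ V_h^0`, `(δ_x² δ_y² v, Λ_h v) ≤ 0`. -/
theorem stmt10 (Mx My : ℕ) (hMx : 2 ≤ Mx) (hMy : 2 ≤ My) (v : GridFn)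
    (hv : BZero Mx My v) :
    innp Mx My (dxx Mx (dyy My v)) (Lamh Mx My v) ≤ 0 :=
  stmt10_general Mx My v hv
end
end

section
/- For any grid function v ∈ V_h^0, (δ_x² δ_y² v, Λ_h v) ≤ −(2/3)(‖δ_x δ_y² v‖_x² + ‖δ_x² δ_y v‖_y²); in particular the explicit identity (δ_x² δ_y² v, Λ_h v) = −‖δ_x δ_y² v‖_x² − ‖δ_x² δ_y v‖_y² + ((h_x² + h_y²)/12) ‖δ_x² δ_y² v‖² holds. -/
open Finset

noncomputable section

lemma shift_sum (g : ℕ → ℝ) (N : ℕ) :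
    ∑ j ∈ Icc 1 N, g (j + 1) = ∑ j ∈ Icc 2 (N + 1), g j := by
  induction N with
  | zero => simp
  | succ n ih =>
      rw [Finset.sum_Icc_succ_top (by omega : 1 ≤ n + 1), ih,
        Finset.sum_Icc_succ_top (by omega : 2 ≤ n + 2)]

lemma sbp_aux (f : ℕ → ℝ) (h0 : f 0 = 0) (N : ℕ) :
    ∑ j ∈ Icc 1 N, (f (j + 1) - 2 * f j + f (j - 1)) * f j
      = -∑ j ∈ Icc 1 (N + 1), (f j - f (j - 1)) ^ 2
        + (f (N + 1) - f N) * f (N + 1) := by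
  induction N with
  | zero => simp [h0]; ring
  | succ n ih =>
      rw [Finset.sum_Icc_succ_top (by omega : 1 ≤ n + 1),
        Finset.sum_Icc_succ_top (by omega : 1 ≤ n + 2), ih]
      simp only [Nat.add_sub_cancel]
      ring

lemma sbp (f : ℕ → ℝ) (M : ℕ) (hM : 1 ≤ M) (h0 : f 0 = 0) (hM0 : f M = 0) :
    ∑ j ∈ Icc 1 (M - 1), (f (j + 1) - 2 * f j + f (j - 1)) * f j
      = -∑ j ∈ Icc 1 M, (f j - f (j - 1)) ^ 2 := by
  have h := sbp_aux f h0 (M - 1)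
  rw [Nat.sub_add_cancel hM] at h
  rw [h, hM0]
  ring

lemma sq_sum_bound (g : ℕ → ℝ) (N : ℕ) :
    ∑ j ∈ Icc 1 N, (g (j + 1) - g j) ^ 2 ≤ 4 * ∑ j ∈ Icc 1 (N + 1), g j ^ 2 := by
  have h1 : ∑ j ∈ Icc 1 N, (g (j + 1) - g j) ^ 2
      ≤ ∑ j ∈ Icc 1 N, (2 * g (j + 1) ^ 2 + 2 * g j ^ 2) := by
    apply Finset.sum_le_sum
    intro j _
    nlinarith [sq_nonneg (g (j + 1) + g j)]
  have h2 : ∑ j ∈ Icc 1 N, g (j + 1) ^ 2 ≤ ∑ j ∈ Icc 1 (N + 1), g j ^ 2 := by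
    rw [shift_sum (fun j => g j ^ 2) N]
    exact Finset.sum_le_sum_of_subset_of_nonneg (Finset.Icc_subset_Icc_left (by omega))
      (fun j _ _ => sq_nonneg _)
  have h3 : ∑ j ∈ Icc 1 N, g j ^ 2 ≤ ∑ j ∈ Icc 1 (N + 1), g j ^ 2 :=
    Finset.sum_le_sum_of_subset_of_nonneg (Finset.Icc_subset_Icc_right (by omega))
      (fun j _ _ => sq_nonneg _)
  have h4 : ∑ j ∈ Icc 1 N, (2 * g (j + 1) ^ 2 + 2 * g j ^ 2)
      = 2 * ∑ j ∈ Icc 1 N, g (j + 1) ^ 2 + 2 * ∑ j ∈ Icc 1 N, g j ^ 2 := by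
    rw [Finset.sum_add_distrib, Finset.mul_sum, Finset.mul_sum]
  linarith

lemma dcomm (Mx My : ℕ) (v : GridFn) (i j : ℕ) :
    dyy My (dxx Mx v) i j = dxx Mx (dyy My v) i j := by
  simp only [dxx, dyy]
  ring

/-- For any `v ∈ V_h^0`:
`(δ_x²δ_y² v, Λ_h v) ≤ −(2/3)(‖δ_x δ_y² v‖_x² + ‖δ_x² δ_y v‖_y²)`, together with the identity
`(δ_x²δ_y² v, Λ_h v) = −‖δ_x δ_y² v‖_x² − ‖δ_x² δ_y v‖_y² + ((h_x²+h_y²)/12)‖δ_x²δ_y² v‖²`. -/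
theorem stmt12 (Mx My : ℕ) (hMx : 2 ≤ Mx) (hMy : 2 ≤ My) (v : GridFn)
    (hv : BZero Mx My v) :
    innp Mx My (dxx Mx (dyy My v)) (Lamh Mx My v)
        ≤ -(2 / 3) * (nrmX2 Mx My (dyy My v) + nrmY2 Mx My (dxx Mx v))
    ∧ innp Mx My (dxx Mx (dyy My v)) (Lamh Mx My v)
        = -(nrmX2 Mx My (dyy My v)) - nrmY2 Mx My (dxx Mx v)
          + ((hx Mx) ^ 2 + (hy My) ^ 2) / 12
            * innp Mx My (dxx Mx (dyy My v)) (dxx Mx (dyy My v)) := by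
  have hhx : (0:ℝ) < hx Mx := by
    rw [hx]
    exact inv_pos.mpr (by exact_mod_cast (by omega : 0 < Mx))
  have hhy : (0:ℝ) < hy My := by
    rw [hy]
    exact inv_pos.mpr (by exact_mod_cast (by omega : 0 < My))
  have hhxne : hx Mx ≠ 0 := ne_of_gt hhx
  have hhyne : hy My ≠ 0 := ne_of_gt hhy
  -- boundary values of the second differences
  have hA_bd : ∀ i, 1 ≤ i → i ≤ Mx - 1 → ∀ j, j = 0 ∨ j = My → dxx Mx v i j = 0 := by
    intro i h1 h2 j hj
    have e1 : v (i + 1) j = 0 := hv (i + 1) (by omega) j (by omega) (by omega)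
    have e2 : v i j = 0 := hv i (by omega) j (by omega) (by omega)
    have e3 : v (i - 1) j = 0 := hv (i - 1) (by omega) j (by omega) (by omega)
    simp [dxx, e1, e2, e3]
  have hB_bd : ∀ j, 1 ≤ j → j ≤ My - 1 → ∀ i, i = 0 ∨ i = Mx → dyy My v i j = 0 := by
    intro j h1 h2 i hi
    have e1 : v i (j + 1) = 0 := hv i (by omega) (j + 1) (by omega) (by omega)
    have e2 : v i j = 0 := hv i (by omega) j (by omega) (by omega)
    have e3 : v i (j - 1) = 0 := hv i (by omega) (j - 1) (by omega) (by omega)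
    simp [dyy, e1, e2, e3]
  -- summation by parts in y
  have per_i : ∀ i ∈ Icc 1 (Mx - 1),
      (∑ j ∈ Icc 1 (My - 1), dxx Mx (dyy My v) i j * dxx Mx v i j)
        = -∑ j ∈ Icc 1 My, ((dxx Mx v i j - dxx Mx v i (j - 1)) / hy My) ^ 2 := by
    intro i hi
    rw [mem_Icc] at hi
    have key := sbp (fun j => dxx Mx v i j) My (by omega)
      (hA_bd i hi.1 hi.2 0 (Or.inl rfl)) (hA_bd i hi.1 hi.2 My (Or.inr rfl))
    try simp only [] at key
    have lhs_eq : ∀ j ∈ Icc 1 (My - 1),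
        dxx Mx (dyy My v) i j * dxx Mx v i j
          = (1 / (hy My) ^ 2)
            * ((dxx Mx v i (j + 1) - 2 * dxx Mx v i j + dxx Mx v i (j - 1)) * dxx Mx v i j) := by
      intro j _
      rw [← dcomm]
      simp only [dyy]
      ring
    have rhs_eq : ∀ j ∈ Icc 1 My,
        ((dxx Mx v i j - dxx Mx v i (j - 1)) / hy My) ^ 2
          = (1 / (hy My) ^ 2) * (dxx Mx v i j - dxx Mx v i (j - 1)) ^ 2 := by
      intro j _
      rw [div_pow]; ring
    rw [Finset.sum_congr rfl lhs_eq, ← Finset.mul_sum, key,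
      Finset.sum_congr rfl rhs_eq, ← Finset.mul_sum]
    ring
  -- summation by parts in x
  have per_j : ∀ j ∈ Icc 1 (My - 1),
      (∑ i ∈ Icc 1 (Mx - 1), dxx Mx (dyy My v) i j * dyy My v i j)
        = -∑ i ∈ Icc 1 Mx, ((dyy My v i j - dyy My v (i - 1) j) / hx Mx) ^ 2 := by
    intro j hj
    rw [mem_Icc] at hj
    have key := sbp (fun i => dyy My v i j) Mx (by omega)
      (hB_bd j hj.1 hj.2 0 (Or.inl rfl)) (hB_bd j hj.1 hj.2 Mx (Or.inr rfl))
    try simp only [] at key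
    have lhs_eq : ∀ i ∈ Icc 1 (Mx - 1),
        dxx Mx (dyy My v) i j * dyy My v i j
          = (1 / (hx Mx) ^ 2)
            * ((dyy My v (i + 1) j - 2 * dyy My v i j + dyy My v (i - 1) j) * dyy My v i j) := by
      intro i _
      simp only [dxx]
      ring
    have rhs_eq : ∀ i ∈ Icc 1 Mx,
        ((dyy My v i j - dyy My v (i - 1) j) / hx Mx) ^ 2
          = (1 / (hx Mx) ^ 2) * (dyy My v i j - dyy My v (i - 1) j) ^ 2 := by
      intro i _
      rw [div_pow]; ring
    rw [Finset.sum_congr rfl lhs_eq, ← Finset.mul_sum, key,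
      Finset.sum_congr rfl rhs_eq, ← Finset.mul_sum]
    ring
  have e2 : innp Mx My (dxx Mx (dyy My v)) (dxx Mx v) = -(nrmY2 Mx My (dxx Mx v)) := by
    simp only [innp, nrmY2]
    rw [Finset.sum_congr rfl per_i, Finset.sum_neg_distrib]
    ring
  have e3 : innp Mx My (dxx Mx (dyy My v)) (dyy My v) = -(nrmX2 Mx My (dyy My v)) := by
    have swap1 : (∑ i ∈ Icc 1 (Mx - 1), ∑ j ∈ Icc 1 (My - 1),
          dxx Mx (dyy My v) i j * dyy My v i j)
        = ∑ j ∈ Icc 1 (My - 1), ∑ i ∈ Icc 1 (Mx - 1),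
            dxx Mx (dyy My v) i j * dyy My v i j := Finset.sum_comm
    have swap2 : (∑ i ∈ Icc 1 Mx, ∑ j ∈ Icc 1 (My - 1),
          ((dyy My v i j - dyy My v (i - 1) j) / hx Mx) ^ 2)
        = ∑ j ∈ Icc 1 (My - 1), ∑ i ∈ Icc 1 Mx,
            ((dyy My v i j - dyy My v (i - 1) j) / hx Mx) ^ 2 := Finset.sum_comm
    simp only [innp, nrmX2]
    rw [swap1, Finset.sum_congr rfl per_j, Finset.sum_neg_distrib, swap2]
    ring
  -- pointwise decomposition of the pairing with Λ_h v
  have hsum : ∀ i ∈ Icc 1 (Mx - 1), ∀ j ∈ Icc 1 (My - 1),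
      dxx Mx (dyy My v) i j * Lamh Mx My v i j
        = dxx Mx (dyy My v) i j * dxx Mx v i j
          + dxx Mx (dyy My v) i j * dyy My v i j
          + ((hx Mx) ^ 2 + (hy My) ^ 2) / 12
            * (dxx Mx (dyy My v) i j * dxx Mx (dyy My v) i j) := by
    intro i hi j hj
    rw [mem_Icc] at hi hj
    simp only [Lamh, Hcy, Hcx]
    rw [if_pos (⟨hj.1, hj.2⟩ : 1 ≤ j ∧ j ≤ My - 1),
      if_pos (⟨hi.1, hi.2⟩ : 1 ≤ i ∧ i ≤ Mx - 1), dcomm]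
    ring
  have e1 : innp Mx My (dxx Mx (dyy My v)) (Lamh Mx My v)
      = innp Mx My (dxx Mx (dyy My v)) (dxx Mx v)
        + innp Mx My (dxx Mx (dyy My v)) (dyy My v)
        + ((hx Mx) ^ 2 + (hy My) ^ 2) / 12
          * innp Mx My (dxx Mx (dyy My v)) (dxx Mx (dyy My v)) := by
    simp only [innp]
    rw [Finset.sum_congr rfl (fun i hi => Finset.sum_congr rfl (fun j hj => hsum i hi j hj))]
    simp only [Finset.sum_add_distrib, ← Finset.mul_sum]
    ring
  have hident : innp Mx My (dxx Mx (dyy My v)) (Lamh Mx My v)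
      = -(nrmX2 Mx My (dyy My v)) - nrmY2 Mx My (dxx Mx v)
        + ((hx Mx) ^ 2 + (hy My) ^ 2) / 12
          * innp Mx My (dxx Mx (dyy My v)) (dxx Mx (dyy My v)) := by
    rw [e1, e2, e3]; ring
  -- bound ‖δx²δy² v‖² by (4/hx²) ‖δx δy² v‖_x²
  have bx : ∀ j ∈ Icc 1 (My - 1),
      (∑ i ∈ Icc 1 (Mx - 1), dxx Mx (dyy My v) i j * dxx Mx (dyy My v) i j)
        ≤ 4 / (hx Mx) ^ 2
          * ∑ i ∈ Icc 1 Mx, ((dyy My v i j - dyy My v (i - 1) j) / hx Mx) ^ 2 := by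
    intro j _
    have key := sq_sum_bound (fun i => dyy My v i j - dyy My v (i - 1) j) (Mx - 1)
    rw [Nat.sub_add_cancel (by omega : 1 ≤ Mx)] at key
    try simp only [] at key
    have step1 : (∑ i ∈ Icc 1 (Mx - 1), dxx Mx (dyy My v) i j * dxx Mx (dyy My v) i j)
        = (1 / (hx Mx) ^ 2) ^ 2 * ∑ i ∈ Icc 1 (Mx - 1),
            ((dyy My v (i + 1) j - dyy My v (i + 1 - 1) j)
              - (dyy My v i j - dyy My v (i - 1) j)) ^ 2 := by
      rw [Finset.mul_sum]
      refine Finset.sum_congr rfl (fun i _ => ?_)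
      simp only [dxx, Nat.add_sub_cancel]
      ring
    have step3 : ∀ i ∈ Icc 1 Mx,
        ((dyy My v i j - dyy My v (i - 1) j) / hx Mx) ^ 2
          = (1 / (hx Mx) ^ 2) * (dyy My v i j - dyy My v (i - 1) j) ^ 2 := by
      intro i _
      rw [div_pow]; ring
    calc (∑ i ∈ Icc 1 (Mx - 1), dxx Mx (dyy My v) i j * dxx Mx (dyy My v) i j)
        = (1 / (hx Mx) ^ 2) ^ 2 * ∑ i ∈ Icc 1 (Mx - 1),
            ((dyy My v (i + 1) j - dyy My v (i + 1 - 1) j)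
              - (dyy My v i j - dyy My v (i - 1) j)) ^ 2 := step1
      _ ≤ (1 / (hx Mx) ^ 2) ^ 2
            * (4 * ∑ i ∈ Icc 1 Mx, (dyy My v i j - dyy My v (i - 1) j) ^ 2) :=
          mul_le_mul_of_nonneg_left key (by positivity)
      _ = 4 / (hx Mx) ^ 2
            * ∑ i ∈ Icc 1 Mx, ((dyy My v i j - dyy My v (i - 1) j) / hx Mx) ^ 2 := by
          rw [Finset.sum_congr rfl step3, ← Finset.mul_sum]
          ring
  -- bound ‖δx²δy² v‖² by (4/hy²) ‖δx² δy v‖_y²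
  have byy : ∀ i ∈ Icc 1 (Mx - 1),
      (∑ j ∈ Icc 1 (My - 1), dxx Mx (dyy My v) i j * dxx Mx (dyy My v) i j)
        ≤ 4 / (hy My) ^ 2
          * ∑ j ∈ Icc 1 My, ((dxx Mx v i j - dxx Mx v i (j - 1)) / hy My) ^ 2 := by
    intro i _
    have key := sq_sum_bound (fun j => dxx Mx v i j - dxx Mx v i (j - 1)) (My - 1)
    rw [Nat.sub_add_cancel (by omega : 1 ≤ My)] at key
    try simp only [] at key
    have step1 : (∑ j ∈ Icc 1 (My - 1), dxx Mx (dyy My v) i j * dxx Mx (dyy My v) i j)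
        = (1 / (hy My) ^ 2) ^ 2 * ∑ j ∈ Icc 1 (My - 1),
            ((dxx Mx v i (j + 1) - dxx Mx v i (j + 1 - 1))
              - (dxx Mx v i j - dxx Mx v i (j - 1))) ^ 2 := by
      rw [Finset.mul_sum]
      refine Finset.sum_congr rfl (fun j _ => ?_)
      rw [← dcomm]
      simp only [dyy, Nat.add_sub_cancel]
      ring
    have step3 : ∀ j ∈ Icc 1 My,
        ((dxx Mx v i j - dxx Mx v i (j - 1)) / hy My) ^ 2
          = (1 / (hy My) ^ 2) * (dxx Mx v i j - dxx Mx v i (j - 1)) ^ 2 := by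
      intro j _
      rw [div_pow]; ring
    calc (∑ j ∈ Icc 1 (My - 1), dxx Mx (dyy My v) i j * dxx Mx (dyy My v) i j)
        = (1 / (hy My) ^ 2) ^ 2 * ∑ j ∈ Icc 1 (My - 1),
            ((dxx Mx v i (j + 1) - dxx Mx v i (j + 1 - 1))
              - (dxx Mx v i j - dxx Mx v i (j - 1))) ^ 2 := step1
      _ ≤ (1 / (hy My) ^ 2) ^ 2
            * (4 * ∑ j ∈ Icc 1 My, (dxx Mx v i j - dxx Mx v i (j - 1)) ^ 2) :=
          mul_le_mul_of_nonneg_left key (by positivity)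
      _ = 4 / (hy My) ^ 2
            * ∑ j ∈ Icc 1 My, ((dxx Mx v i j - dxx Mx v i (j - 1)) / hy My) ^ 2 := by
          rw [Finset.sum_congr rfl step3, ← Finset.mul_sum]
          ring
  have bX : innp Mx My (dxx Mx (dyy My v)) (dxx Mx (dyy My v))
      ≤ 4 / (hx Mx) ^ 2 * nrmX2 Mx My (dyy My v) := by
    have swap1 : (∑ i ∈ Icc 1 (Mx - 1), ∑ j ∈ Icc 1 (My - 1),
          dxx Mx (dyy My v) i j * dxx Mx (dyy My v) i j)
        = ∑ j ∈ Icc 1 (My - 1), ∑ i ∈ Icc 1 (Mx - 1),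
            dxx Mx (dyy My v) i j * dxx Mx (dyy My v) i j := Finset.sum_comm
    have swap2 : (∑ i ∈ Icc 1 Mx, ∑ j ∈ Icc 1 (My - 1),
          ((dyy My v i j - dyy My v (i - 1) j) / hx Mx) ^ 2)
        = ∑ j ∈ Icc 1 (My - 1), ∑ i ∈ Icc 1 Mx,
            ((dyy My v i j - dyy My v (i - 1) j) / hx Mx) ^ 2 := Finset.sum_comm
    have hle : (∑ j ∈ Icc 1 (My - 1), ∑ i ∈ Icc 1 (Mx - 1),
          dxx Mx (dyy My v) i j * dxx Mx (dyy My v) i j)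
        ≤ ∑ j ∈ Icc 1 (My - 1), 4 / (hx Mx) ^ 2
            * ∑ i ∈ Icc 1 Mx, ((dyy My v i j - dyy My v (i - 1) j) / hx Mx) ^ 2 :=
      Finset.sum_le_sum bx
    simp only [innp, nrmX2]
    rw [swap1, swap2]
    rw [← Finset.mul_sum] at hle
    calc hx Mx * hy My * ∑ j ∈ Icc 1 (My - 1), ∑ i ∈ Icc 1 (Mx - 1),
          dxx Mx (dyy My v) i j * dxx Mx (dyy My v) i j
        ≤ hx Mx * hy My * (4 / (hx Mx) ^ 2 * ∑ j ∈ Icc 1 (My - 1),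
            ∑ i ∈ Icc 1 Mx, ((dyy My v i j - dyy My v (i - 1) j) / hx Mx) ^ 2) :=
          mul_le_mul_of_nonneg_left hle (by positivity)
      _ = 4 / (hx Mx) ^ 2 * (hx Mx * hy My * ∑ j ∈ Icc 1 (My - 1),
            ∑ i ∈ Icc 1 Mx, ((dyy My v i j - dyy My v (i - 1) j) / hx Mx) ^ 2) := by ring
  have bY : innp Mx My (dxx Mx (dyy My v)) (dxx Mx (dyy My v))
      ≤ 4 / (hy My) ^ 2 * nrmY2 Mx My (dxx Mx v) := by
    have hle : (∑ i ∈ Icc 1 (Mx - 1), ∑ j ∈ Icc 1 (My - 1),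
          dxx Mx (dyy My v) i j * dxx Mx (dyy My v) i j)
        ≤ ∑ i ∈ Icc 1 (Mx - 1), 4 / (hy My) ^ 2
            * ∑ j ∈ Icc 1 My, ((dxx Mx v i j - dxx Mx v i (j - 1)) / hy My) ^ 2 :=
      Finset.sum_le_sum byy
    simp only [innp, nrmY2]
    rw [← Finset.mul_sum] at hle
    calc hx Mx * hy My * ∑ i ∈ Icc 1 (Mx - 1), ∑ j ∈ Icc 1 (My - 1),
          dxx Mx (dyy My v) i j * dxx Mx (dyy My v) i j
        ≤ hx Mx * hy My * (4 / (hy My) ^ 2 * ∑ i ∈ Icc 1 (Mx - 1),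
            ∑ j ∈ Icc 1 My, ((dxx Mx v i j - dxx Mx v i (j - 1)) / hy My) ^ 2) :=
          mul_le_mul_of_nonneg_left hle (by positivity)
      _ = 4 / (hy My) ^ 2 * (hx Mx * hy My * ∑ i ∈ Icc 1 (Mx - 1),
            ∑ j ∈ Icc 1 My, ((dxx Mx v i j - dxx Mx v i (j - 1)) / hy My) ^ 2) := by ring
  refine ⟨?_, hident⟩
  have b1 : (hx Mx) ^ 2 / 12 * innp Mx My (dxx Mx (dyy My v)) (dxx Mx (dyy My v))
      ≤ 1 / 3 * nrmX2 Mx My (dyy My v) := by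
    have h := mul_le_mul_of_nonneg_left bX
      (show (0:ℝ) ≤ (hx Mx) ^ 2 / 12 by positivity)
    have heq : (hx Mx) ^ 2 / 12 * (4 / (hx Mx) ^ 2 * nrmX2 Mx My (dyy My v))
        = 1 / 3 * nrmX2 Mx My (dyy My v) := by
      field_simp
      ring
    linarith
  have b2 : (hy My) ^ 2 / 12 * innp Mx My (dxx Mx (dyy My v)) (dxx Mx (dyy My v))
      ≤ 1 / 3 * nrmY2 Mx My (dxx Mx v) := by
    have h := mul_le_mul_of_nonneg_left bY
      (show (0:ℝ) ≤ (hy My) ^ 2 / 12 by positivity)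
    have heq : (hy My) ^ 2 / 12 * (4 / (hy My) ^ 2 * nrmY2 Mx My (dxx Mx v))
        = 1 / 3 * nrmY2 Mx My (dxx Mx v) := by
      field_simp
      ring
    linarith
  have hsplit : ((hx Mx) ^ 2 + (hy My) ^ 2) / 12
        * innp Mx My (dxx Mx (dyy My v)) (dxx Mx (dyy My v))
      = (hx Mx) ^ 2 / 12 * innp Mx My (dxx Mx (dyy My v)) (dxx Mx (dyy My v))
        + (hy My) ^ 2 / 12 * innp Mx My (dxx Mx (dyy My v)) (dxx Mx (dyy My v)) := by
    ring
  linarith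
end
end

section
/- Let g : ℝ → ℝ satisfy |g(x) − g(y)| ≤ L|x − y| for all x, y ∈ ℝ and g(0) = 0. Then for all grid functions s, s' ∈ V_h^0, ‖H_h(g∘s) − H_h(g∘s')‖ ≤ L‖s − s'‖ ≤ (9L/4)‖H_h(s − s')‖, where (g∘s)_{i,j} = g(s_{i,j}). -/
open Finset

noncomputable section

namespace Stmt13Aux

lemma hx_pos (Mx : ℕ) (hMx : 2 ≤ Mx) : 0 < hx Mx := by
  unfold hx
  have : (0:ℝ) < Mx := by exact_mod_cast Nat.lt_of_lt_of_le (by norm_num) hMx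
  positivity

lemma hx_ne (Mx : ℕ) (hMx : 2 ≤ Mx) : hx Mx ≠ 0 := ne_of_gt (hx_pos Mx hMx)

lemma Hcx_eq (Mx : ℕ) (hMx : 2 ≤ Mx) (u : GridFn) (i j : ℕ) (h1 : 1 ≤ i) (h2 : i ≤ Mx - 1) :
    Hcx Mx u i j = (u (i-1) j + 10 * u i j + u (i+1) j) / 12 := by
  have h := hx_ne Mx hMx
  simp only [Hcx, dxx, if_pos (And.intro h1 h2)]
  field_simp
  ring

lemma Hcy_eq (My : ℕ) (hMy : 2 ≤ My) (u : GridFn) (i j : ℕ) (h1 : 1 ≤ j) (h2 : j ≤ My - 1) :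
    Hcy My u i j = (u i (j-1) + 10 * u i j + u i (j+1)) / 12 := by
  have h : hy My ≠ 0 := hx_ne My hMy
  simp only [Hcy, dyy, if_pos (And.intro h1 h2)]
  field_simp
  ring

lemma shift_left (M : ℕ) (hM : 2 ≤ M) (w : ℕ → ℝ) (h0 : w 0 = 0) :
    ∑ i ∈ Icc 1 (M-1), w (i-1) ^ 2 ≤ ∑ i ∈ Icc 1 (M-1), w i ^ 2 := by
  have e1 : ∑ i ∈ Icc 1 (M-1), w (i-1) ^ 2 = ∑ i ∈ Icc 0 (M-1-1), w i ^ 2 := by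
    apply Finset.sum_nbij' (fun i => i - 1) (fun i => i + 1)
    · intro a ha; simp only [Finset.mem_Icc] at *; omega
    · intro a ha; simp only [Finset.mem_Icc] at *; omega
    · intro a ha; simp only [Finset.mem_Icc] at ha; omega
    · intro a ha; simp only [Finset.mem_Icc] at ha; omega
    · intro a ha; rfl
  rw [e1]
  have e2 : ∑ i ∈ Icc 0 (M-1-1), w i ^ 2 = ∑ i ∈ Icc 1 (M-1-1), w i ^ 2 := by
    symm
    apply Finset.sum_subset
    · intro i hi; simp only [Finset.mem_Icc] at *; omega
    · intro i hi hni
      simp only [Finset.mem_Icc] at *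
      have : i = 0 := by omega
      simp [this, h0]
  rw [e2]
  apply Finset.sum_le_sum_of_subset_of_nonneg
  · intro i hi; simp only [Finset.mem_Icc] at *; omega
  · intros; positivity

lemma shift_right (M : ℕ) (hM : 2 ≤ M) (w : ℕ → ℝ) (hMw : w M = 0) :
    ∑ i ∈ Icc 1 (M-1), w (i+1) ^ 2 ≤ ∑ i ∈ Icc 1 (M-1), w i ^ 2 := by
  have e1 : ∑ i ∈ Icc 1 (M-1), w (i+1) ^ 2 = ∑ i ∈ Icc 2 M, w i ^ 2 := by
    apply Finset.sum_nbij' (fun i => i + 1) (fun i => i - 1)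
    · intro a ha; simp only [Finset.mem_Icc] at *; omega
    · intro a ha; simp only [Finset.mem_Icc] at *; omega
    · intro a ha; simp only [Finset.mem_Icc] at ha; omega
    · intro a ha; simp only [Finset.mem_Icc] at ha; omega
    · intro a ha; rfl
  rw [e1]
  have e2 : ∑ i ∈ Icc 2 M, w i ^ 2 = ∑ i ∈ Icc 2 (M-1), w i ^ 2 := by
    symm
    apply Finset.sum_subset
    · intro i hi; simp only [Finset.mem_Icc] at *; omega
    · intro i hi hni
      simp only [Finset.mem_Icc] at *
      have : i = M := by omega
      simp [this, hMw]
  rw [e2]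
  apply Finset.sum_le_sum_of_subset_of_nonneg
  · intro i hi; simp only [Finset.mem_Icc] at *; omega
  · intros; positivity

lemma oneD_upper (M : ℕ) (hM : 2 ≤ M) (w : ℕ → ℝ) (h0 : w 0 = 0) (hMw : w M = 0) :
    ∑ i ∈ Icc 1 (M-1), ((w (i-1) + 10 * w i + w (i+1)) / 12) ^ 2
      ≤ ∑ i ∈ Icc 1 (M-1), w i ^ 2 := by
  have h1 := shift_left M hM w h0
  have h2 := shift_right M hM w hMw
  have h3 : ∑ i ∈ Icc 1 (M-1), ((w (i-1) + 10 * w i + w (i+1)) / 12) ^ 2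
      ≤ ∑ i ∈ Icc 1 (M-1), (w (i-1) ^ 2 + 10 * w i ^ 2 + w (i+1) ^ 2) / 12 := by
    apply Finset.sum_le_sum; intro i _
    nlinarith [sq_nonneg (w (i-1) - w i), sq_nonneg (w i - w (i+1)),
      sq_nonneg (w (i-1) - w (i+1))]
  have h4 : ∑ i ∈ Icc 1 (M-1), (w (i-1) ^ 2 + 10 * w i ^ 2 + w (i+1) ^ 2) / 12
      = (∑ i ∈ Icc 1 (M-1), w (i-1) ^ 2 + 10 * ∑ i ∈ Icc 1 (M-1), w i ^ 2
          + ∑ i ∈ Icc 1 (M-1), w (i+1) ^ 2) / 12 := by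
    rw [← Finset.sum_div]
    congr 1
    rw [Finset.sum_add_distrib, Finset.sum_add_distrib, Finset.mul_sum]
  linarith

lemma oneD_lower (M : ℕ) (hM : 2 ≤ M) (w : ℕ → ℝ) (h0 : w 0 = 0) (hMw : w M = 0) :
    ∑ i ∈ Icc 1 (M-1), ((w (i+1) - 2 * w i + w (i-1)) / 12) ^ 2
      ≤ 1/9 * ∑ i ∈ Icc 1 (M-1), w i ^ 2 := by
  have h1 := shift_left M hM w h0
  have h2 := shift_right M hM w hMw
  have h3 : ∑ i ∈ Icc 1 (M-1), ((w (i+1) - 2 * w i + w (i-1)) / 12) ^ 2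
      ≤ ∑ i ∈ Icc 1 (M-1), (w (i-1) ^ 2 + 2 * w i ^ 2 + w (i+1) ^ 2) / 36 := by
    apply Finset.sum_le_sum; intro i _
    nlinarith [sq_nonneg (w (i-1) + w i), sq_nonneg (w i + w (i+1)),
      sq_nonneg (w (i-1) - w (i+1))]
  have h4 : ∑ i ∈ Icc 1 (M-1), (w (i-1) ^ 2 + 2 * w i ^ 2 + w (i+1) ^ 2) / 36
      = (∑ i ∈ Icc 1 (M-1), w (i-1) ^ 2 + 2 * ∑ i ∈ Icc 1 (M-1), w i ^ 2
          + ∑ i ∈ Icc 1 (M-1), w (i+1) ^ 2) / 36 := by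
    rw [← Finset.sum_div]
    congr 1
    rw [Finset.sum_add_distrib, Finset.sum_add_distrib, Finset.mul_sum]
  linarith

end Stmt13Aux
namespace Stmt13Aux

lemma c_nonneg (Mx My : ℕ) : 0 ≤ hx Mx * hy My := by
  unfold hx hy; positivity

lemma innp_self_nonneg (Mx My : ℕ) (v : GridFn) : 0 ≤ innp Mx My v v := by
  unfold innp
  apply mul_nonneg (c_nonneg Mx My)
  apply Finset.sum_nonneg; intro i _
  apply Finset.sum_nonneg; intro j _
  exact mul_self_nonneg _

lemma nrm_nonneg (Mx My : ℕ) (v : GridFn) : 0 ≤ nrm Mx My v := Real.sqrt_nonneg _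

lemma sq_nrm (Mx My : ℕ) (v : GridFn) : nrm Mx My v ^ 2 = innp Mx My v v :=
  Real.sq_sqrt (innp_self_nonneg Mx My v)

lemma innp_le_nrm_mul (Mx My : ℕ) (a b : GridFn) :
    innp Mx My a b ≤ nrm Mx My a * nrm Mx My b := by
  have hc := c_nonneg Mx My
  set S := Icc 1 (Mx-1) ×ˢ Icc 1 (My-1) with hS
  have key : ∑ i ∈ Icc 1 (Mx-1), ∑ j ∈ Icc 1 (My-1), a i j * b i j
      ≤ Real.sqrt (∑ i ∈ Icc 1 (Mx-1), ∑ j ∈ Icc 1 (My-1), a i j * a i j)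
        * Real.sqrt (∑ i ∈ Icc 1 (Mx-1), ∑ j ∈ Icc 1 (My-1), b i j * b i j) := by
    rw [← Finset.sum_product' (f := fun i j => a i j * b i j),
        ← Finset.sum_product' (f := fun i j => a i j * a i j),
        ← Finset.sum_product' (f := fun i j => b i j * b i j)]
    have cs := Finset.sum_mul_sq_le_sq_mul_sq S (fun p => a p.1 p.2) (fun p => b p.1 p.2)
    have h1 : ∑ p ∈ S, a p.1 p.2 * b p.1 p.2
        ≤ |∑ p ∈ S, a p.1 p.2 * b p.1 p.2| := le_abs_self _
    have h2 : |∑ p ∈ S, a p.1 p.2 * b p.1 p.2|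
        = Real.sqrt ((∑ p ∈ S, a p.1 p.2 * b p.1 p.2) ^ 2) := (Real.sqrt_sq_eq_abs _).symm
    have h3 : Real.sqrt ((∑ p ∈ S, a p.1 p.2 * b p.1 p.2) ^ 2)
        ≤ Real.sqrt ((∑ p ∈ S, a p.1 p.2 ^ 2) * ∑ p ∈ S, b p.1 p.2 ^ 2) :=
      Real.sqrt_le_sqrt cs
    have h4 : Real.sqrt ((∑ p ∈ S, a p.1 p.2 ^ 2) * ∑ p ∈ S, b p.1 p.2 ^ 2)
        = Real.sqrt (∑ p ∈ S, a p.1 p.2 ^ 2) * Real.sqrt (∑ p ∈ S, b p.1 p.2 ^ 2) :=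
      Real.sqrt_mul (Finset.sum_nonneg fun p _ => sq_nonneg _) _
    have e1 : ∑ p ∈ S, a p.1 p.2 * a p.1 p.2 = ∑ p ∈ S, a p.1 p.2 ^ 2 := by
      apply Finset.sum_congr rfl; intros; rw [← sq]
    have e2 : ∑ p ∈ S, b p.1 p.2 * b p.1 p.2 = ∑ p ∈ S, b p.1 p.2 ^ 2 := by
      apply Finset.sum_congr rfl; intros; rw [← sq]
    rw [e1, e2]
    calc ∑ p ∈ S, a p.1 p.2 * b p.1 p.2 ≤ _ := h1
      _ = _ := h2
      _ ≤ _ := h3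
      _ = _ := h4
  unfold innp nrm innp
  set c := hx Mx * hy My
  set A := ∑ i ∈ Icc 1 (Mx-1), ∑ j ∈ Icc 1 (My-1), a i j * a i j with hA
  set B := ∑ i ∈ Icc 1 (Mx-1), ∑ j ∈ Icc 1 (My-1), b i j * b i j with hB
  have : Real.sqrt (c * A) * Real.sqrt (c * B)
      = c * (Real.sqrt A * Real.sqrt B) := by
    rw [Real.sqrt_mul hc, Real.sqrt_mul hc]
    rw [show Real.sqrt c * Real.sqrt A * (Real.sqrt c * Real.sqrt B)
        = (Real.sqrt c * Real.sqrt c) * (Real.sqrt A * Real.sqrt B) by ring,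
      Real.mul_self_sqrt hc]
  rw [this]
  exact mul_le_mul_of_nonneg_left key hc

lemma nrm_add (Mx My : ℕ) (a b : GridFn) :
    nrm Mx My (fun i j => a i j + b i j) ≤ nrm Mx My a + nrm Mx My b := by
  have expand : innp Mx My (fun i j => a i j + b i j) (fun i j => a i j + b i j)
      = innp Mx My a a + 2 * innp Mx My a b + innp Mx My b b := by
    unfold innp
    have e : ∀ i ∈ Icc 1 (Mx-1), ∑ j ∈ Icc 1 (My-1), (a i j + b i j) * (a i j + b i j)
        = ∑ j ∈ Icc 1 (My-1), (a i j * a i j + (2 * (a i j * b i j) + b i j * b i j)) := by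
      intro i _; apply Finset.sum_congr rfl; intros; ring
    rw [Finset.sum_congr rfl e]
    simp only [Finset.sum_add_distrib, ← Finset.mul_sum]
    ring
  have hbound : innp Mx My (fun i j => a i j + b i j) (fun i j => a i j + b i j)
      ≤ (nrm Mx My a + nrm Mx My b) ^ 2 := by
    rw [expand]
    have h1 := innp_le_nrm_mul Mx My a b
    have h2 := sq_nrm Mx My a
    have h3 := sq_nrm Mx My b
    nlinarith [nrm_nonneg Mx My a, nrm_nonneg Mx My b]
  calc nrm Mx My (fun i j => a i j + b i j)
      = Real.sqrt (innp Mx My (fun i j => a i j + b i j) (fun i j => a i j + b i j)) := rfl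
    _ ≤ Real.sqrt ((nrm Mx My a + nrm Mx My b) ^ 2) := Real.sqrt_le_sqrt hbound
    _ = nrm Mx My a + nrm Mx My b := Real.sqrt_sq
        (add_nonneg (nrm_nonneg Mx My a) (nrm_nonneg Mx My b))

end Stmt13Aux
namespace Stmt13Aux

lemma upper_x (Mx My : ℕ) (hMx : 2 ≤ Mx) (u : GridFn)
    (hb : ∀ j ∈ Icc 1 (My - 1), u 0 j = 0 ∧ u Mx j = 0) :
    innp Mx My (Hcx Mx u) (Hcx Mx u) ≤ innp Mx My u u := by
  unfold innp
  apply mul_le_mul_of_nonneg_left _ (c_nonneg Mx My)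
  calc ∑ i ∈ Icc 1 (Mx-1), ∑ j ∈ Icc 1 (My-1), Hcx Mx u i j * Hcx Mx u i j
      = ∑ j ∈ Icc 1 (My-1), ∑ i ∈ Icc 1 (Mx-1), Hcx Mx u i j * Hcx Mx u i j :=
        Finset.sum_comm
    _ ≤ ∑ j ∈ Icc 1 (My-1), ∑ i ∈ Icc 1 (Mx-1), u i j * u i j := by
        apply Finset.sum_le_sum
        intro j hj
        have hrw : ∀ i ∈ Icc 1 (Mx-1), Hcx Mx u i j * Hcx Mx u i j
            = ((u (i-1) j + 10 * u i j + u (i+1) j) / 12) ^ 2 := by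
          intro i hi
          simp only [Finset.mem_Icc] at hi
          rw [Hcx_eq Mx hMx u i j hi.1 hi.2, ← sq]
        have hrw2 : ∀ i ∈ Icc 1 (Mx-1), u i j * u i j = u i j ^ 2 := by
          intro i _; rw [← sq]
        rw [Finset.sum_congr rfl hrw, Finset.sum_congr rfl hrw2]
        exact oneD_upper Mx hMx (fun i => u i j) (hb j hj).1 (hb j hj).2
    _ = ∑ i ∈ Icc 1 (Mx-1), ∑ j ∈ Icc 1 (My-1), u i j * u i j := Finset.sum_comm

lemma upper_y (Mx My : ℕ) (hMy : 2 ≤ My) (u : GridFn)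
    (hb : ∀ i ∈ Icc 1 (Mx - 1), u i 0 = 0 ∧ u i My = 0) :
    innp Mx My (Hcy My u) (Hcy My u) ≤ innp Mx My u u := by
  unfold innp
  apply mul_le_mul_of_nonneg_left _ (c_nonneg Mx My)
  apply Finset.sum_le_sum
  intro i hi
  have hrw : ∀ j ∈ Icc 1 (My-1), Hcy My u i j * Hcy My u i j
      = ((u i (j-1) + 10 * u i j + u i (j+1)) / 12) ^ 2 := by
    intro j hj
    simp only [Finset.mem_Icc] at hj
    rw [Hcy_eq My hMy u i j hj.1 hj.2, ← sq]
  have hrw2 : ∀ j ∈ Icc 1 (My-1), u i j * u i j = u i j ^ 2 := by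
    intro j _; rw [← sq]
  rw [Finset.sum_congr rfl hrw, Finset.sum_congr rfl hrw2]
  exact oneD_upper My hMy (fun j => u i j) (hb i hi).1 (hb i hi).2

lemma lowdiff_x (Mx My : ℕ) (hMx : 2 ≤ Mx) (u : GridFn)
    (hb : ∀ j ∈ Icc 1 (My - 1), u 0 j = 0 ∧ u Mx j = 0) :
    innp Mx My (fun i j => u i j - Hcx Mx u i j) (fun i j => u i j - Hcx Mx u i j)
      ≤ 1/9 * innp Mx My u u := by
  unfold innp
  rw [mul_left_comm]
  apply mul_le_mul_of_nonneg_left _ (c_nonneg Mx My)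
  calc ∑ i ∈ Icc 1 (Mx-1), ∑ j ∈ Icc 1 (My-1),
        (u i j - Hcx Mx u i j) * (u i j - Hcx Mx u i j)
      = ∑ j ∈ Icc 1 (My-1), ∑ i ∈ Icc 1 (Mx-1),
        (u i j - Hcx Mx u i j) * (u i j - Hcx Mx u i j) := Finset.sum_comm
    _ ≤ ∑ j ∈ Icc 1 (My-1), 1/9 * ∑ i ∈ Icc 1 (Mx-1), u i j ^ 2 := by
        apply Finset.sum_le_sum
        intro j hj
        have hrw : ∀ i ∈ Icc 1 (Mx-1),
            (u i j - Hcx Mx u i j) * (u i j - Hcx Mx u i j)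
            = ((u (i+1) j - 2 * u i j + u (i-1) j) / 12) ^ 2 := by
          intro i hi
          simp only [Finset.mem_Icc] at hi
          rw [Hcx_eq Mx hMx u i j hi.1 hi.2]; ring
        rw [Finset.sum_congr rfl hrw]
        exact oneD_lower Mx hMx (fun i => u i j) (hb j hj).1 (hb j hj).2
    _ = 1/9 * ∑ j ∈ Icc 1 (My-1), ∑ i ∈ Icc 1 (Mx-1), u i j ^ 2 :=
        (Finset.mul_sum _ _ _).symm
    _ = 1/9 * ∑ i ∈ Icc 1 (Mx-1), ∑ j ∈ Icc 1 (My-1), u i j * u i j := by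
        congr 1
        rw [Finset.sum_comm]
        apply Finset.sum_congr rfl; intro i _
        apply Finset.sum_congr rfl; intro j _
        rw [← sq]

lemma lowdiff_y (Mx My : ℕ) (hMy : 2 ≤ My) (u : GridFn)
    (hb : ∀ i ∈ Icc 1 (Mx - 1), u i 0 = 0 ∧ u i My = 0) :
    innp Mx My (fun i j => u i j - Hcy My u i j) (fun i j => u i j - Hcy My u i j)
      ≤ 1/9 * innp Mx My u u := by
  unfold innp
  rw [mul_left_comm]
  apply mul_le_mul_of_nonneg_left _ (c_nonneg Mx My)
  calc ∑ i ∈ Icc 1 (Mx-1), ∑ j ∈ Icc 1 (My-1),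
        (u i j - Hcy My u i j) * (u i j - Hcy My u i j)
      ≤ ∑ i ∈ Icc 1 (Mx-1), 1/9 * ∑ j ∈ Icc 1 (My-1), u i j ^ 2 := by
        apply Finset.sum_le_sum
        intro i hi
        have hrw : ∀ j ∈ Icc 1 (My-1),
            (u i j - Hcy My u i j) * (u i j - Hcy My u i j)
            = ((u i (j+1) - 2 * u i j + u i (j-1)) / 12) ^ 2 := by
          intro j hj
          simp only [Finset.mem_Icc] at hj
          rw [Hcy_eq My hMy u i j hj.1 hj.2]; ring
        rw [Finset.sum_congr rfl hrw]
        exact oneD_lower My hMy (fun j => u i j) (hb i hi).1 (hb i hi).2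
    _ = 1/9 * ∑ i ∈ Icc 1 (Mx-1), ∑ j ∈ Icc 1 (My-1), u i j * u i j := by
        rw [← Finset.mul_sum]
        congr 1
        apply Finset.sum_congr rfl; intro i _
        apply Finset.sum_congr rfl; intro j _
        rw [← sq]

lemma sqrt_ninth (x : ℝ) (hx0 : 0 ≤ x) : Real.sqrt (1/9 * x) = 1/3 * Real.sqrt x := by
  rw [Real.sqrt_mul (by norm_num), show (1/9:ℝ) = (1/3)^2 by norm_num,
    Real.sqrt_sq (by norm_num : (0:ℝ) ≤ 1/3)]

lemma nrm_le_of_innp {Mx My : ℕ} {a b : GridFn}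
    (h : innp Mx My a a ≤ innp Mx My b b) : nrm Mx My a ≤ nrm Mx My b :=
  Real.sqrt_le_sqrt h

lemma nrm_Hcx_le (Mx My : ℕ) (hMx : 2 ≤ Mx) (u : GridFn)
    (hb : ∀ j ∈ Icc 1 (My - 1), u 0 j = 0 ∧ u Mx j = 0) :
    nrm Mx My (Hcx Mx u) ≤ nrm Mx My u :=
  nrm_le_of_innp (upper_x Mx My hMx u hb)

lemma nrm_Hcy_le (Mx My : ℕ) (hMy : 2 ≤ My) (u : GridFn)
    (hb : ∀ i ∈ Icc 1 (Mx - 1), u i 0 = 0 ∧ u i My = 0) :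
    nrm Mx My (Hcy My u) ≤ nrm Mx My u :=
  nrm_le_of_innp (upper_y Mx My hMy u hb)

lemma nrm_le_Hcx (Mx My : ℕ) (hMx : 2 ≤ Mx) (u : GridFn)
    (hb : ∀ j ∈ Icc 1 (My - 1), u 0 j = 0 ∧ u Mx j = 0) :
    nrm Mx My u ≤ 3/2 * nrm Mx My (Hcx Mx u) := by
  have h1 : nrm Mx My u ≤ nrm Mx My (Hcx Mx u)
      + nrm Mx My (fun i j => u i j - Hcx Mx u i j) := by
    have e : u = fun i j => Hcx Mx u i j + (u i j - Hcx Mx u i j) := by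
      funext i j; ring
    nth_rewrite 1 [e]
    exact nrm_add Mx My (Hcx Mx u) (fun i j => u i j - Hcx Mx u i j)
  have h2 : nrm Mx My (fun i j => u i j - Hcx Mx u i j) ≤ 1/3 * nrm Mx My u := by
    have h := Real.sqrt_le_sqrt (lowdiff_x Mx My hMx u hb)
    rwa [sqrt_ninth _ (innp_self_nonneg Mx My u)] at h
  have h3 := nrm_nonneg Mx My u
  linarith

lemma nrm_le_Hcy (Mx My : ℕ) (hMy : 2 ≤ My) (u : GridFn)
    (hb : ∀ i ∈ Icc 1 (Mx - 1), u i 0 = 0 ∧ u i My = 0) :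
    nrm Mx My u ≤ 3/2 * nrm Mx My (Hcy My u) := by
  have h1 : nrm Mx My u ≤ nrm Mx My (Hcy My u)
      + nrm Mx My (fun i j => u i j - Hcy My u i j) := by
    have e : u = fun i j => Hcy My u i j + (u i j - Hcy My u i j) := by
      funext i j; ring
    nth_rewrite 1 [e]
    exact nrm_add Mx My (Hcy My u) (fun i j => u i j - Hcy My u i j)
  have h2 : nrm Mx My (fun i j => u i j - Hcy My u i j) ≤ 1/3 * nrm Mx My u := by
    have h := Real.sqrt_le_sqrt (lowdiff_y Mx My hMy u hb)
    rwa [sqrt_ninth _ (innp_self_nonneg Mx My u)] at h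
  have h3 := nrm_nonneg Mx My u
  linarith

lemma Hcy_bnd (My : ℕ) (u : GridFn) (i : ℕ) (h : ∀ j ≤ My, u i j = 0)
    (j : ℕ) (hj : 1 ≤ j ∧ j ≤ My - 1) (hMy : 2 ≤ My) : Hcy My u i j = 0 := by
  unfold Hcy dyy
  have h1 := h (j+1) (by omega)
  have h2 := h j (by omega)
  have h3 := h (j-1) (by omega)
  split_ifs <;> simp [h1, h2, h3]

end Stmt13Aux
open Stmt13Aux

/-- Let `g : ℝ → ℝ` be `L`-Lipschitz with `g 0 = 0`.  Then for all grid
functions `s, s' ∈ V_h^0`,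
`‖H_h(g∘s) − H_h(g∘s')‖ ≤ L‖s − s'‖ ≤ (9L/4)‖H_h(s − s')‖`. -/
theorem stmt13 (Mx My : ℕ) (hMx : 2 ≤ Mx) (hMy : 2 ≤ My)
    (L : ℝ) (g : ℝ → ℝ) (hg : ∀ x y : ℝ, |g x - g y| ≤ L * |x - y|) (hg0 : g 0 = 0)
    (s s' : GridFn) (hs : BZero Mx My s) (hs' : BZero Mx My s') :
    nrm Mx My (fun i j =>
        Hch Mx My (fun a b => g (s a b)) i j - Hch Mx My (fun a b => g (s' a b)) i j)
      ≤ L * nrm Mx My (fun i j => s i j - s' i j)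
    ∧ L * nrm Mx My (fun i j => s i j - s' i j)
      ≤ 9 * L / 4 * nrm Mx My (Hch Mx My (fun i j => s i j - s' i j)) := by
  have hL : 0 ≤ L := le_trans (abs_nonneg (g 1 - g 0)) (by simpa using hg 1 0)
  have hsz : ∀ i ≤ Mx, ∀ j ≤ My, (i = 0 ∨ i = Mx ∨ j = 0 ∨ j = My) → s i j - s' i j = 0 := by
    intro i hi j hj h; rw [hs i hi j hj h, hs' i hi j hj h]; ring
  have hwz : ∀ i ≤ Mx, ∀ j ≤ My, (i = 0 ∨ i = Mx ∨ j = 0 ∨ j = My) →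
      g (s i j) - g (s' i j) = 0 := by
    intro i hi j hj h; rw [hs i hi j hj h, hs' i hi j hj h]; ring
  constructor
  · -- Part 1
    have hEq : (fun i j => Hch Mx My (fun a b => g (s a b)) i j
        - Hch Mx My (fun a b => g (s' a b)) i j)
        = Hch Mx My (fun a b => g (s a b) - g (s' a b)) := by
      funext i j
      simp only [Hch, Hcx, Hcy, dxx, dyy]
      split_ifs <;> ring
    rw [hEq]
    have hb_x : ∀ j ∈ Icc 1 (My - 1),
        Hcy My (fun a b => g (s a b) - g (s' a b)) 0 j = 0
        ∧ Hcy My (fun a b => g (s a b) - g (s' a b)) Mx j = 0 := by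
      intro j hj
      simp only [Finset.mem_Icc] at hj
      exact ⟨Hcy_bnd My _ 0 (fun j' hj' => hwz 0 (by omega) j' hj' (Or.inl rfl)) j hj hMy,
        Hcy_bnd My _ Mx (fun j' hj' => hwz Mx le_rfl j' hj' (Or.inr (Or.inl rfl))) j hj hMy⟩
    have hb_y : ∀ i ∈ Icc 1 (Mx - 1),
        g (s i 0) - g (s' i 0) = 0 ∧ g (s i My) - g (s' i My) = 0 := by
      intro i hi
      simp only [Finset.mem_Icc] at hi
      exact ⟨hwz i (by omega) 0 (by omega) (by tauto), hwz i (by omega) My le_rfl (by tauto)⟩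
    have step1 : nrm Mx My (Hch Mx My (fun a b => g (s a b) - g (s' a b)))
        ≤ nrm Mx My (fun a b => g (s a b) - g (s' a b)) := by
      unfold Hch
      exact le_trans (nrm_Hcx_le Mx My hMx _ hb_x) (nrm_Hcy_le Mx My hMy _ hb_y)
    have hptw : innp Mx My (fun a b => g (s a b) - g (s' a b))
          (fun a b => g (s a b) - g (s' a b))
        ≤ L ^ 2 * innp Mx My (fun i j => s i j - s' i j) (fun i j => s i j - s' i j) := by
      unfold innp
      rw [mul_left_comm]
      apply mul_le_mul_of_nonneg_left _ (c_nonneg Mx My)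
      rw [Finset.mul_sum]
      apply Finset.sum_le_sum; intro i _
      rw [Finset.mul_sum]
      apply Finset.sum_le_sum; intro j _
      calc (g (s i j) - g (s' i j)) * (g (s i j) - g (s' i j))
          = |g (s i j) - g (s' i j)| * |g (s i j) - g (s' i j)| := (abs_mul_abs_self _).symm
        _ ≤ (L * |s i j - s' i j|) * (L * |s i j - s' i j|) :=
            mul_self_le_mul_self (abs_nonneg _) (hg _ _)
        _ = L ^ 2 * (|s i j - s' i j| * |s i j - s' i j|) := by ring
        _ = L ^ 2 * ((s i j - s' i j) * (s i j - s' i j)) := by rw [abs_mul_abs_self]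
    have step2 : nrm Mx My (fun a b => g (s a b) - g (s' a b))
        ≤ L * nrm Mx My (fun i j => s i j - s' i j) := by
      have h := Real.sqrt_le_sqrt hptw
      rwa [Real.sqrt_mul (sq_nonneg L), Real.sqrt_sq hL] at h
    exact le_trans step1 step2
  · -- Part 2
    have hvb_y : ∀ i ∈ Icc 1 (Mx - 1),
        s i 0 - s' i 0 = 0 ∧ s i My - s' i My = 0 := by
      intro i hi
      simp only [Finset.mem_Icc] at hi
      exact ⟨hsz i (by omega) 0 (by omega) (by tauto), hsz i (by omega) My le_rfl (by tauto)⟩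
    have hvb_x : ∀ j ∈ Icc 1 (My - 1),
        Hcy My (fun i j => s i j - s' i j) 0 j = 0
        ∧ Hcy My (fun i j => s i j - s' i j) Mx j = 0 := by
      intro j hj
      simp only [Finset.mem_Icc] at hj
      exact ⟨Hcy_bnd My _ 0 (fun j' hj' => hsz 0 (by omega) j' hj' (Or.inl rfl)) j hj hMy,
        Hcy_bnd My _ Mx (fun j' hj' => hsz Mx le_rfl j' hj' (Or.inr (Or.inl rfl))) j hj hMy⟩
    have a1 := nrm_le_Hcy Mx My hMy (fun i j => s i j - s' i j) hvb_y
    have a2 := nrm_le_Hcx Mx My hMx (Hcy My (fun i j => s i j - s' i j)) hvb_x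
    have a3 : nrm Mx My (fun i j => s i j - s' i j)
        ≤ 9/4 * nrm Mx My (Hch Mx My (fun i j => s i j - s' i j)) := by
      unfold Hch
      linarith
    calc L * nrm Mx My (fun i j => s i j - s' i j)
        ≤ L * (9/4 * nrm Mx My (Hch Mx My (fun i j => s i j - s' i j))) :=
          mul_le_mul_of_nonneg_left a3 hL
      _ = 9 * L / 4 * nrm Mx My (Hch Mx My (fun i j => s i j - s' i j)) := by ring
end
end

section
/- Let d₂ > 0, a₂₂ ∈ ℝ, and let g : ℝ → ℝ satisfy |g(x) − g(y)| ≤ L|x − y| for all x, y ∈ ℝ and g(0) = 0. Suppose s, l, w ∈ V_h^0 and a grid function λ satisfy −d₂ Λ_h l_{i,j} + a₂₂ H_h l_{i,j} − H_h(g∘s)_{i,j} = −H_h w_{i,j} + λ_{i,j} for all interior indices 1 ≤ i ≤ M_x−1, 1 ≤ j ≤ M_y−1, where (g∘s)_{i,j} = g(s_{i,j}). Then d₂² ‖Λ_h l‖² ≤ 4‖H_h w‖² + 4a₂₂² ‖H_h l‖² + (81L²/4)‖H_h s‖² + 4‖λ‖². -/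
open Finset

noncomputable section

section Aux

lemma shiftUp (M : ℕ) (hM : 2 ≤ M) (f : ℕ → ℝ) (hMf : f M = 0) :
    ∑ i ∈ Icc 1 (M-1), f (i+1) ^ 2 ≤ ∑ i ∈ Icc 1 (M-1), f i ^ 2 := by
  have h1 : ∑ i ∈ Icc 1 (M-1), f (i+1) ^ 2 = ∑ i ∈ Icc 2 M, f i ^ 2 := by
    have h : Icc 2 M = map (addRightEmbedding 1) (Icc 1 (M-1)) := by
      rw [map_add_right_Icc]; congr 1; omega
    rw [h, Finset.sum_map]; rfl
  have h2 : Icc 2 M = insert M (Icc 2 (M-1)) := by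
    ext x; simp; omega
  rw [h1, h2, Finset.sum_insert (by simp; omega)]
  rw [hMf]
  simpa using Finset.sum_le_sum_of_subset_of_nonneg
    (Finset.Icc_subset_Icc (by omega) le_rfl)
    (fun i _ _ => sq_nonneg (f i))

lemma shiftDown (M : ℕ) (hM : 2 ≤ M) (f : ℕ → ℝ) (h0f : f 0 = 0) :
    ∑ i ∈ Icc 1 (M-1), f (i-1) ^ 2 ≤ ∑ i ∈ Icc 1 (M-1), f i ^ 2 := by
  have h1 : ∑ i ∈ Icc 1 (M-1), f (i-1) ^ 2 = ∑ i ∈ Icc 0 (M-2), f i ^ 2 := by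
    have h : Icc 1 (M-1) = map (addRightEmbedding 1) (Icc 0 (M-2)) := by
      rw [map_add_right_Icc]; congr 1; omega
    rw [h, Finset.sum_map]
    exact Finset.sum_congr rfl fun i _ => by simp [addRightEmbedding]
  have h2 : Icc 0 (M-2) = insert 0 (Icc 1 (M-2)) := by
    ext x; simp; omega
  rw [h1, h2, Finset.sum_insert (by simp), h0f]
  simpa using Finset.sum_le_sum_of_subset_of_nonneg
    (Finset.Icc_subset_Icc le_rfl (by omega))
    (fun i _ _ => sq_nonneg (f i))

lemma oneD_upper (M : ℕ) (hM : 2 ≤ M) (f : ℕ → ℝ) (h0f : f 0 = 0) (hMf : f M = 0) :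
    ∑ i ∈ Icc 1 (M-1), ((f (i-1) + 10 * f i + f (i+1)) / 12) ^ 2
      ≤ ∑ i ∈ Icc 1 (M-1), f i ^ 2 := by
  have key : ∀ i, ((f (i-1) + 10 * f i + f (i+1)) / 12) ^ 2
      ≤ (1/12) * (f (i-1) ^ 2 + 10 * f i ^ 2 + f (i+1) ^ 2) := by
    intro i
    nlinarith [sq_nonneg (f (i-1) - f i), sq_nonneg (f i - f (i+1)), sq_nonneg (f (i-1) - f (i+1))]
  calc ∑ i ∈ Icc 1 (M-1), ((f (i-1) + 10 * f i + f (i+1)) / 12) ^ 2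
      ≤ ∑ i ∈ Icc 1 (M-1), (1/12) * (f (i-1) ^ 2 + 10 * f i ^ 2 + f (i+1) ^ 2) :=
        Finset.sum_le_sum fun i _ => key i
    _ = (1/12) * (∑ i ∈ Icc 1 (M-1), f (i-1) ^ 2 + 10 * ∑ i ∈ Icc 1 (M-1), f i ^ 2
          + ∑ i ∈ Icc 1 (M-1), f (i+1) ^ 2) := by
        rw [← Finset.mul_sum]; congr 1
        rw [Finset.sum_add_distrib, Finset.sum_add_distrib, Finset.mul_sum]
    _ ≤ ∑ i ∈ Icc 1 (M-1), f i ^ 2 := by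
        have h1 := shiftUp M hM f hMf
        have h2 := shiftDown M hM f h0f
        linarith

lemma oneD_err (M : ℕ) (hM : 2 ≤ M) (f : ℕ → ℝ) (h0f : f 0 = 0) (hMf : f M = 0) :
    ∑ i ∈ Icc 1 (M-1), ((f (i+1) - 2 * f i + f (i-1)) / 12) ^ 2
      ≤ (1/9) * ∑ i ∈ Icc 1 (M-1), f i ^ 2 := by
  have key : ∀ i, ((f (i+1) - 2 * f i + f (i-1)) / 12) ^ 2
      ≤ (1/36) * (f (i-1) ^ 2 + 2 * f i ^ 2 + f (i+1) ^ 2) := by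
    intro i
    nlinarith [sq_nonneg (f (i-1) + f i), sq_nonneg (f i + f (i+1)), sq_nonneg (f (i-1) - f (i+1))]
  calc ∑ i ∈ Icc 1 (M-1), ((f (i+1) - 2 * f i + f (i-1)) / 12) ^ 2
      ≤ ∑ i ∈ Icc 1 (M-1), (1/36) * (f (i-1) ^ 2 + 2 * f i ^ 2 + f (i+1) ^ 2) :=
        Finset.sum_le_sum fun i _ => key i
    _ = (1/36) * (∑ i ∈ Icc 1 (M-1), f (i-1) ^ 2 + 2 * ∑ i ∈ Icc 1 (M-1), f i ^ 2
          + ∑ i ∈ Icc 1 (M-1), f (i+1) ^ 2) := by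
        rw [← Finset.mul_sum]; congr 1
        rw [Finset.sum_add_distrib, Finset.sum_add_distrib, Finset.mul_sum]
    _ ≤ (1/9) * ∑ i ∈ Icc 1 (M-1), f i ^ 2 := by
        have h1 := shiftUp M hM f hMf
        have h2 := shiftDown M hM f h0f
        linarith

lemma oneD_lower (M : ℕ) (hM : 2 ≤ M) (f : ℕ → ℝ) (h0f : f 0 = 0) (hMf : f M = 0) :
    ∑ i ∈ Icc 1 (M-1), f i ^ 2
      ≤ (9/4) * ∑ i ∈ Icc 1 (M-1), ((f (i-1) + 10 * f i + f (i+1)) / 12) ^ 2 := by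
  have key : ∀ i, f i ^ 2 ≤ (3/2) * ((f (i-1) + 10 * f i + f (i+1)) / 12) ^ 2
      + 3 * ((f (i+1) - 2 * f i + f (i-1)) / 12) ^ 2 := by
    intro i
    nlinarith [sq_nonneg (f i + 3 * ((f (i+1) - 2 * f i + f (i-1)) / 12))]
  have h1 : ∑ i ∈ Icc 1 (M-1), f i ^ 2
      ≤ (3/2) * ∑ i ∈ Icc 1 (M-1), ((f (i-1) + 10 * f i + f (i+1)) / 12) ^ 2
        + 3 * ∑ i ∈ Icc 1 (M-1), ((f (i+1) - 2 * f i + f (i-1)) / 12) ^ 2 := by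
    rw [Finset.mul_sum, Finset.mul_sum, ← Finset.sum_add_distrib]
    exact Finset.sum_le_sum fun i _ => key i
  have h2 := oneD_err M hM f h0f hMf
  linarith

lemma Hcx_interior (Mx : ℕ) (hMx : 2 ≤ Mx) (v : GridFn) (i j : ℕ)
    (hi : 1 ≤ i ∧ i ≤ Mx - 1) :
    Hcx Mx v i j = (v (i-1) j + 10 * v i j + v (i+1) j) / 12 := by
  have hx0 : hx Mx ≠ 0 := by
    simp only [hx, ne_eq, inv_eq_zero, Nat.cast_eq_zero]; omega
  simp only [Hcx, if_pos hi, dxx]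
  field_simp
  ring

lemma Hcy_interior (My : ℕ) (hMy : 2 ≤ My) (v : GridFn) (i j : ℕ)
    (hj : 1 ≤ j ∧ j ≤ My - 1) :
    Hcy My v i j = (v i (j-1) + 10 * v i j + v i (j+1)) / 12 := by
  have hy0 : hy My ≠ 0 := by
    simp only [hy, ne_eq, inv_eq_zero, Nat.cast_eq_zero]; omega
  simp only [Hcy, if_pos hj, dyy]
  field_simp
  ring

lemma Hcy_bzero (Mx My : ℕ) (hMx : 2 ≤ Mx) (hMy : 2 ≤ My) (v : GridFn)
    (hv : BZero Mx My v) : BZero Mx My (Hcy My v) := by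
  intro i hi j hj hd
  by_cases h : 1 ≤ j ∧ j ≤ My - 1
  · have hio : i = 0 ∨ i = Mx := by
      rcases hd with h1 | h1 | h1 | h1
      · exact Or.inl h1
      · exact Or.inr h1
      · omega
      · omega
    have e1 : v i j = 0 := hv i hi j hj hd
    have e2 : v i (j+1) = 0 := hv i hi (j+1) (by omega) (by tauto)
    have e3 : v i (j-1) = 0 := hv i hi (j-1) (by omega) (by tauto)
    simp only [Hcy, if_pos h, dyy, e1, e2, e3]
    ring
  · simp only [Hcy, if_neg h]
    exact hv i hi j hj hd

end Aux

section Aux2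

lemma T_Hcy_upper (Mx My : ℕ) (hMy : 2 ≤ My) (v : GridFn) (hv : BZero Mx My v) :
    ∑ i ∈ Icc 1 (Mx-1), ∑ j ∈ Icc 1 (My-1), (Hcy My v i j) ^ 2
      ≤ ∑ i ∈ Icc 1 (Mx-1), ∑ j ∈ Icc 1 (My-1), (v i j) ^ 2 := by
  refine Finset.sum_le_sum fun i hi => ?_
  have hi' : i ≤ Mx := by simp only [Finset.mem_Icc] at hi; omega
  have hb0 : v i 0 = 0 := hv i hi' 0 (by omega) (by tauto)
  have hbM : v i My = 0 := hv i hi' My le_rfl (by tauto)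
  have hrw : ∑ j ∈ Icc 1 (My-1), (Hcy My v i j) ^ 2
      = ∑ j ∈ Icc 1 (My-1), ((v i (j-1) + 10 * v i j + v i (j+1)) / 12) ^ 2 := by
    refine Finset.sum_congr rfl fun j hj => ?_
    rw [Hcy_interior My hMy v i j (by simpa using hj)]
  rw [hrw]
  exact oneD_upper My hMy (v i) hb0 hbM

lemma T_Hcy_lower (Mx My : ℕ) (hMy : 2 ≤ My) (v : GridFn) (hv : BZero Mx My v) :
    ∑ i ∈ Icc 1 (Mx-1), ∑ j ∈ Icc 1 (My-1), (v i j) ^ 2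
      ≤ (9/4) * ∑ i ∈ Icc 1 (Mx-1), ∑ j ∈ Icc 1 (My-1), (Hcy My v i j) ^ 2 := by
  rw [Finset.mul_sum]
  refine Finset.sum_le_sum fun i hi => ?_
  have hi' : i ≤ Mx := by simp only [Finset.mem_Icc] at hi; omega
  have hb0 : v i 0 = 0 := hv i hi' 0 (by omega) (by tauto)
  have hbM : v i My = 0 := hv i hi' My le_rfl (by tauto)
  have hrw : ∑ j ∈ Icc 1 (My-1), (Hcy My v i j) ^ 2
      = ∑ j ∈ Icc 1 (My-1), ((v i (j-1) + 10 * v i j + v i (j+1)) / 12) ^ 2 := by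
    refine Finset.sum_congr rfl fun j hj => ?_
    rw [Hcy_interior My hMy v i j (by simpa using hj)]
  rw [hrw]
  exact oneD_lower My hMy (v i) hb0 hbM

lemma T_Hcx_upper (Mx My : ℕ) (hMx : 2 ≤ Mx) (v : GridFn) (hv : BZero Mx My v) :
    ∑ i ∈ Icc 1 (Mx-1), ∑ j ∈ Icc 1 (My-1), (Hcx Mx v i j) ^ 2
      ≤ ∑ i ∈ Icc 1 (Mx-1), ∑ j ∈ Icc 1 (My-1), (v i j) ^ 2 := by
  rw [Finset.sum_comm]
  rw [Finset.sum_comm (s := Icc 1 (Mx-1))]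
  refine Finset.sum_le_sum fun j hj => ?_
  have hj' : j ≤ My := by simp only [Finset.mem_Icc] at hj; omega
  have hb0 : v 0 j = 0 := hv 0 (by omega) j hj' (by tauto)
  have hbM : v Mx j = 0 := hv Mx le_rfl j hj' (by tauto)
  have hrw : ∑ i ∈ Icc 1 (Mx-1), (Hcx Mx v i j) ^ 2
      = ∑ i ∈ Icc 1 (Mx-1), ((v (i-1) j + 10 * v i j + v (i+1) j) / 12) ^ 2 := by
    refine Finset.sum_congr rfl fun i hi => ?_
    rw [Hcx_interior Mx hMx v i j (by simpa using hi)]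
  rw [hrw]
  exact oneD_upper Mx hMx (fun i => v i j) hb0 hbM

lemma T_Hcx_lower (Mx My : ℕ) (hMx : 2 ≤ Mx) (v : GridFn) (hv : BZero Mx My v) :
    ∑ i ∈ Icc 1 (Mx-1), ∑ j ∈ Icc 1 (My-1), (v i j) ^ 2
      ≤ (9/4) * ∑ i ∈ Icc 1 (Mx-1), ∑ j ∈ Icc 1 (My-1), (Hcx Mx v i j) ^ 2 := by
  rw [Finset.sum_comm]
  rw [Finset.sum_comm (s := Icc 1 (Mx-1)) (t := Icc 1 (My-1))]
  rw [Finset.mul_sum]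
  refine Finset.sum_le_sum fun j hj => ?_
  have hj' : j ≤ My := by simp only [Finset.mem_Icc] at hj; omega
  have hb0 : v 0 j = 0 := hv 0 (by omega) j hj' (by tauto)
  have hbM : v Mx j = 0 := hv Mx le_rfl j hj' (by tauto)
  have hrw : ∑ i ∈ Icc 1 (Mx-1), (Hcx Mx v i j) ^ 2
      = ∑ i ∈ Icc 1 (Mx-1), ((v (i-1) j + 10 * v i j + v (i+1) j) / 12) ^ 2 := by
    refine Finset.sum_congr rfl fun i hi => ?_
    rw [Hcx_interior Mx hMx v i j (by simpa using hi)]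
  rw [hrw]
  exact oneD_lower Mx hMx (fun i => v i j) hb0 hbM

lemma T_Hch_upper (Mx My : ℕ) (hMx : 2 ≤ Mx) (hMy : 2 ≤ My) (v : GridFn)
    (hv : BZero Mx My v) :
    ∑ i ∈ Icc 1 (Mx-1), ∑ j ∈ Icc 1 (My-1), (Hch Mx My v i j) ^ 2
      ≤ ∑ i ∈ Icc 1 (Mx-1), ∑ j ∈ Icc 1 (My-1), (v i j) ^ 2 := by
  have h1 := T_Hcx_upper Mx My hMx (Hcy My v) (Hcy_bzero Mx My hMx hMy v hv)
  have h2 := T_Hcy_upper Mx My hMy v hv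
  exact le_trans h1 h2

lemma T_Hch_lower (Mx My : ℕ) (hMx : 2 ≤ Mx) (hMy : 2 ≤ My) (v : GridFn)
    (hv : BZero Mx My v) :
    ∑ i ∈ Icc 1 (Mx-1), ∑ j ∈ Icc 1 (My-1), (v i j) ^ 2
      ≤ (81/16) * ∑ i ∈ Icc 1 (Mx-1), ∑ j ∈ Icc 1 (My-1), (Hch Mx My v i j) ^ 2 := by
  have h1 := T_Hcy_lower Mx My hMy v hv
  have h2 := T_Hcx_lower Mx My hMx (Hcy My v) (Hcy_bzero Mx My hMx hMy v hv)
  calc ∑ i ∈ Icc 1 (Mx-1), ∑ j ∈ Icc 1 (My-1), (v i j) ^ 2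
      ≤ (9/4) * ∑ i ∈ Icc 1 (Mx-1), ∑ j ∈ Icc 1 (My-1), (Hcy My v i j) ^ 2 := h1
    _ ≤ (9/4) * ((9/4) * ∑ i ∈ Icc 1 (Mx-1), ∑ j ∈ Icc 1 (My-1), (Hch Mx My v i j) ^ 2) := by
        simp only [Hch]; linarith
    _ = (81/16) * ∑ i ∈ Icc 1 (Mx-1), ∑ j ∈ Icc 1 (My-1), (Hch Mx My v i j) ^ 2 := by ring

end Aux2
/-- Let `d₂ > 0`, `a₂₂ ∈ ℝ`, and let `g` be `L`-Lipschitz with `g 0 = 0`.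
If `s, l, w ∈ V_h^0` and a grid function `λ` satisfy
`−d₂ Λ_h l + a₂₂ H_h l − H_h(g∘s) = −H_h w + λ` at all interior indices, then
`d₂² ‖Λ_h l‖² ≤ 4‖H_h w‖² + 4a₂₂² ‖H_h l‖² + (81L²/4)‖H_h s‖² + 4‖λ‖²`. -/
theorem stmt15 (Mx My : ℕ) (hMx : 2 ≤ Mx) (hMy : 2 ≤ My)
    (d2 a22 L : ℝ) (hd2 : 0 < d2)
    (g : ℝ → ℝ) (hg : ∀ x y : ℝ, |g x - g y| ≤ L * |x - y|) (hg0 : g 0 = 0)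
    (s l w lam : GridFn) (hs : BZero Mx My s) (hl : BZero Mx My l) (hw : BZero Mx My w)
    (heq : ∀ i j, interiorIdx Mx My i j →
      -d2 * Lamh Mx My l i j + a22 * Hch Mx My l i j
          - Hch Mx My (fun a b => g (s a b)) i j
        = -(Hch Mx My w i j) + lam i j) :
    d2 ^ 2 * innp Mx My (Lamh Mx My l) (Lamh Mx My l)
      ≤ 4 * innp Mx My (Hch Mx My w) (Hch Mx My w)
        + 4 * a22 ^ 2 * innp Mx My (Hch Mx My l) (Hch Mx My l)
        + 81 * L ^ 2 / 4 * innp Mx My (Hch Mx My s) (Hch Mx My s)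
        + 4 * innp Mx My lam lam := by
  have hx0 : (0:ℝ) < hx Mx := by
    have : (0:ℝ) < (Mx:ℝ) := by exact_mod_cast Nat.lt_of_lt_of_le Nat.zero_lt_two hMx
    simpa [hx] using inv_pos.mpr this
  have hy0 : (0:ℝ) < hy My := by
    have : (0:ℝ) < (My:ℝ) := by exact_mod_cast Nat.lt_of_lt_of_le Nat.zero_lt_two hMy
    simpa [hy] using inv_pos.mpr this
  set gs : GridFn := fun a b => g (s a b) with hgs_def
  have hgsz : BZero Mx My gs := by
    intro i hi j hj hd
    simp only [hgs_def, hs i hi j hj hd, hg0]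
  -- pointwise Lipschitz bound
  have hgs_sq : ∀ i j, (gs i j) ^ 2 ≤ L ^ 2 * (s i j) ^ 2 := by
    intro i j
    have h := hg (s i j) 0
    rw [hg0, sub_zero, sub_zero] at h
    nlinarith [sq_abs (g (s i j)), sq_abs (s i j), abs_nonneg (g (s i j)),
      abs_nonneg (s i j), h]
  -- sum-level bounds for the nonlinear term
  have Tgs1 := T_Hch_upper Mx My hMx hMy gs hgsz
  have Tgs2 : ∑ i ∈ Icc 1 (Mx-1), ∑ j ∈ Icc 1 (My-1), (gs i j) ^ 2
      ≤ L ^ 2 * ∑ i ∈ Icc 1 (Mx-1), ∑ j ∈ Icc 1 (My-1), (s i j) ^ 2 := by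
    rw [Finset.mul_sum]
    refine Finset.sum_le_sum fun i _ => ?_
    rw [Finset.mul_sum]
    exact Finset.sum_le_sum fun j _ => hgs_sq i j
  have Ts := T_Hch_lower Mx My hMx hMy s hs
  have hgschain : ∑ i ∈ Icc 1 (Mx-1), ∑ j ∈ Icc 1 (My-1), (Hch Mx My gs i j) ^ 2
      ≤ (81/16) * L ^ 2 * ∑ i ∈ Icc 1 (Mx-1), ∑ j ∈ Icc 1 (My-1), (Hch Mx My s i j) ^ 2 := by
    have h3 := mul_le_mul_of_nonneg_left Ts (sq_nonneg L)
    nlinarith [h3, Tgs1, Tgs2]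
  -- pointwise consequence of the scheme equation
  have key : ∀ i ∈ Icc 1 (Mx-1), ∀ j ∈ Icc 1 (My-1),
      d2 ^ 2 * (Lamh Mx My l i j) ^ 2
        ≤ 4 * (Hch Mx My w i j) ^ 2 + 4 * a22 ^ 2 * (Hch Mx My l i j) ^ 2
          + 4 * (Hch Mx My gs i j) ^ 2 + 4 * (lam i j) ^ 2 := by
    intro i hi j hj
    simp only [Finset.mem_Icc] at hi hj
    have hE := heq i j ⟨hi.1, hi.2, hj.1, hj.2⟩
    have hE' : d2 * Lamh Mx My l i j
        = a22 * Hch Mx My l i j - Hch Mx My gs i j + Hch Mx My w i j - lam i j := by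
      rw [hgs_def]; linarith [hE]
    have h2 : d2 ^ 2 * (Lamh Mx My l i j) ^ 2
        = (a22 * Hch Mx My l i j - Hch Mx My gs i j + Hch Mx My w i j - lam i j) ^ 2 := by
      rw [show d2 ^ 2 * (Lamh Mx My l i j) ^ 2 = (d2 * Lamh Mx My l i j) ^ 2 from by ring, hE']
    nlinarith [h2, sq_nonneg (a22 * Hch Mx My l i j + Hch Mx My gs i j),
      sq_nonneg (a22 * Hch Mx My l i j - Hch Mx My w i j),
      sq_nonneg (a22 * Hch Mx My l i j + lam i j),
      sq_nonneg (Hch Mx My gs i j + Hch Mx My w i j),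
      sq_nonneg (Hch Mx My gs i j - lam i j),
      sq_nonneg (Hch Mx My w i j + lam i j)]
  -- summed main inequality
  have sum1 : d2 ^ 2 * ∑ i ∈ Icc 1 (Mx-1), ∑ j ∈ Icc 1 (My-1), (Lamh Mx My l i j) ^ 2
      ≤ 4 * (∑ i ∈ Icc 1 (Mx-1), ∑ j ∈ Icc 1 (My-1), (Hch Mx My w i j) ^ 2)
        + 4 * a22 ^ 2 * (∑ i ∈ Icc 1 (Mx-1), ∑ j ∈ Icc 1 (My-1), (Hch Mx My l i j) ^ 2)
        + 4 * (∑ i ∈ Icc 1 (Mx-1), ∑ j ∈ Icc 1 (My-1), (Hch Mx My gs i j) ^ 2)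
        + 4 * (∑ i ∈ Icc 1 (Mx-1), ∑ j ∈ Icc 1 (My-1), (lam i j) ^ 2) := by
    have h := Finset.sum_le_sum (s := Icc 1 (Mx-1))
      (f := fun i => ∑ j ∈ Icc 1 (My-1), d2 ^ 2 * (Lamh Mx My l i j) ^ 2)
      (g := fun i => ∑ j ∈ Icc 1 (My-1),
        (4 * (Hch Mx My w i j) ^ 2 + 4 * a22 ^ 2 * (Hch Mx My l i j) ^ 2
          + 4 * (Hch Mx My gs i j) ^ 2 + 4 * (lam i j) ^ 2))
      (fun i hi => Finset.sum_le_sum fun j hj => key i hi j hj)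
    simp only [Finset.sum_add_distrib, ← Finset.mul_sum] at h
    linarith [h]
  simp only [innp, ← pow_two]
  have comb : d2 ^ 2 * ∑ i ∈ Icc 1 (Mx-1), ∑ j ∈ Icc 1 (My-1), (Lamh Mx My l i j) ^ 2
      ≤ 4 * (∑ i ∈ Icc 1 (Mx-1), ∑ j ∈ Icc 1 (My-1), (Hch Mx My w i j) ^ 2)
        + 4 * a22 ^ 2 * (∑ i ∈ Icc 1 (Mx-1), ∑ j ∈ Icc 1 (My-1), (Hch Mx My l i j) ^ 2)
        + 81 * L ^ 2 / 4 * (∑ i ∈ Icc 1 (Mx-1), ∑ j ∈ Icc 1 (My-1), (Hch Mx My s i j) ^ 2)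
        + 4 * (∑ i ∈ Icc 1 (Mx-1), ∑ j ∈ Icc 1 (My-1), (lam i j) ^ 2) := by
    linarith [sum1, hgschain]
  have hxy : (0:ℝ) ≤ hx Mx * hy My := (mul_pos hx0 hy0).le
  have hfin := mul_le_mul_of_nonneg_left comb hxy
  linarith [hfin]
end
end
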